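/- arXiv:2208.13995 — 9 statements merged into one kernel-verified Lean document; each statement's English description precedes it below -/
import Mathlib

section
/- Let $r \geq t \geq 3$ and let $n_1 \geq n_2 \geq \cdots \geq n_r$ be positive integers. Define $f(n_1,\ldots,n_r,1,t)$ as the maximum over all partitions $\mathcal{P}$ of $[r]$ into $t-1$ nonempty parts of $\sum_{I \neq I' \in \mathcal{P}} n_I \cdot n_{I'}$, where $n_I = \sum_{i \in I} n_i$. Then $f(n_1,\ldots,n_r,1,t) \geq f(n_1,\ldots,n_r,1,t-1) + n_{t-1}^2$. -/
/-- The number of edges of the complete multipartite graph obtained by merging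
classes of sizes `n 1, …, n r` according to the partition (surjection) `P` into `s` groups:
`∑_{I ≠ I' ∈ P} n_I n_{I'}` over unordered pairs of parts. -/
def partitionValue {r s : ℕ} (n : Fin r → ℕ) (P : Fin r → Fin s) : ℕ :=
  ∑ p ∈ Finset.univ.filter (fun p : Fin s × Fin s => p.1 < p.2),
    (∑ i ∈ Finset.univ.filter (fun i => P i = p.1), n i) *
    (∑ i ∈ Finset.univ.filter (fun i => P i = p.2), n i)

/-- `f(n₁,…,n_r,1,t)`: the maximum of `∑_{I ≠ I' ∈ 𝒫} n_I n_{I'}` over all partitions `𝒫`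
of `[r]` into `t-1` (nonempty) parts. -/
def fval (r t : ℕ) (n : Fin r → ℕ) : ℕ :=
  Finset.sup
    (Finset.univ.filter (fun P : Fin r → Fin (t - 1) => Function.Surjective P))
    (partitionValue n)

open Finset

/-- The basic square identity: twice the partition value plus the sum of squares of the
part sizes equals the square of the total. -/
lemma sq_identity {r s : ℕ} (n : Fin r → ℕ) (P : Fin r → Fin s) :
    2 * partitionValue n P
      + ∑ c : Fin s, (∑ i ∈ Finset.univ.filter (fun i => P i = c), n i) ^ 2
      = (∑ i, n i) ^ 2 := by
  classical
  set A : Fin s → ℕ := fun c => ∑ i ∈ Finset.univ.filter (fun i => P i = c), n i with hA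
  have hS : (∑ i, n i) = ∑ c, A c := (Finset.sum_fiberwise Finset.univ P n).symm
  rw [hS, sq, Finset.sum_mul_sum]
  have htot : (∑ c : Fin s, ∑ c' : Fin s, A c * A c')
      = ∑ p ∈ (Finset.univ : Finset (Fin s × Fin s)), A p.1 * A p.2 := by
    rw [← Finset.univ_product_univ, Finset.sum_product]
  rw [htot]
  have hsplit1 := Finset.sum_filter_add_sum_filter_not (Finset.univ : Finset (Fin s × Fin s))
    (fun p => p.1 < p.2) (fun p => A p.1 * A p.2)
  have hsplit2 := Finset.sum_filter_add_sum_filter_not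
    ((Finset.univ : Finset (Fin s × Fin s)).filter (fun p => ¬ p.1 < p.2))
    (fun p => p.2 < p.1) (fun p => A p.1 * A p.2)
  have hset1 : ((Finset.univ : Finset (Fin s × Fin s)).filter (fun p => ¬ p.1 < p.2)).filter
      (fun p => p.2 < p.1) = (Finset.univ : Finset (Fin s × Fin s)).filter (fun p => p.2 < p.1) := by
    rw [Finset.filter_filter]
    apply Finset.filter_congr
    intro p _
    simp only [Fin.lt_def, eq_iff_iff]
    omega
  have hset2 : ((Finset.univ : Finset (Fin s × Fin s)).filter (fun p => ¬ p.1 < p.2)).filter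
      (fun p => ¬ p.2 < p.1) = (Finset.univ : Finset (Fin s × Fin s)).filter
      (fun p => p.1 = p.2) := by
    rw [Finset.filter_filter]
    apply Finset.filter_congr
    intro p _
    simp only [Fin.lt_def, eq_iff_iff, Fin.ext_iff]
    omega
  rw [hset1, hset2] at hsplit2
  have hgt : ∑ p ∈ (Finset.univ : Finset (Fin s × Fin s)).filter (fun p => p.2 < p.1),
      A p.1 * A p.2 = ∑ p ∈ (Finset.univ : Finset (Fin s × Fin s)).filter (fun p => p.1 < p.2),
      A p.1 * A p.2 := by
    apply Finset.sum_nbij' (i := Prod.swap) (j := Prod.swap) <;>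
      simp [mul_comm]
  have hdiag : ∑ p ∈ (Finset.univ : Finset (Fin s × Fin s)).filter (fun p => p.1 = p.2),
      A p.1 * A p.2 = ∑ c : Fin s, A c ^ 2 := by
    apply Finset.sum_nbij' (i := Prod.fst) (j := fun c => (c, c)) <;>
      simp +contextual [sq]
  have hPV : partitionValue n P = ∑ p ∈ (Finset.univ : Finset (Fin s × Fin s)).filter
      (fun p => p.1 < p.2), A p.1 * A p.2 := rfl
  have hgoal : (∑ c : Fin s, (∑ i ∈ Finset.univ.filter (fun i => P i = c), n i) ^ 2)
      = ∑ c : Fin s, A c ^ 2 := rfl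
  omega

/-- Key step: splitting one of two merged classes off into a new part increases the
partition value by at least the product of their sizes. -/
lemma key_step {r s : ℕ} (n : Fin r → ℕ) (P : Fin r → Fin (s + 1))
    (i j : Fin r) (hij : i ≠ j) (hPij : P i = P j) (hP : Function.Surjective P) :
    ∃ Q : Fin r → Fin (s + 2), Function.Surjective Q ∧
      partitionValue n P + n i * n j ≤ partitionValue n Q := by
  classical
  refine ⟨fun k => if k = j then Fin.last (s + 1) else (P k).castSucc, ?_, ?_⟩
  · intro c
    induction c using Fin.lastCases with
    | last => exact ⟨j, by simp⟩
    | cast c =>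
      obtain ⟨k, hk⟩ := hP c
      by_cases hkj : k = j
      · refine ⟨i, ?_⟩
        subst hkj
        simp [hij, hPij, hk]
      · exact ⟨k, by simp [hkj, hk]⟩
  · set Q : Fin r → Fin (s + 2) :=
      fun k => if k = j then Fin.last (s + 1) else (P k).castSucc with hQ
    set A : Fin (s + 1) → ℕ := fun c => ∑ k ∈ Finset.univ.filter (fun k => P k = c), n k with hA
    set B : Fin (s + 2) → ℕ := fun c => ∑ k ∈ Finset.univ.filter (fun k => Q k = c), n k with hB
    have h1 : 2 * partitionValue n P + ∑ c : Fin (s + 1), A c ^ 2 = (∑ i, n i) ^ 2 :=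
      sq_identity n P
    have h2 : 2 * partitionValue n Q + ∑ c : Fin (s + 2), B c ^ 2 = (∑ i, n i) ^ 2 :=
      sq_identity n Q
    -- fibers of Q
    have hBlast : B (Fin.last (s + 1)) = n j := by
      have : Finset.univ.filter (fun k => Q k = Fin.last (s + 1)) = {j} := by
        ext k
        simp only [Finset.mem_filter, Finset.mem_univ, true_and, Finset.mem_singleton, hQ]
        by_cases hk : k = j
        · simp [hk]
        · simp [hk, Fin.ext_iff]
          omega
      rw [hB]; simp only; rw [this, Finset.sum_singleton]
    have hBcast : ∀ c : Fin (s + 1),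
        Finset.univ.filter (fun k => Q k = c.castSucc)
          = Finset.univ.filter (fun k => P k = c ∧ k ≠ j) := by
      intro c
      ext k
      simp only [Finset.mem_filter, Finset.mem_univ, true_and, hQ]
      by_cases hk : k = j
      · simp only [hk, if_pos rfl]
        constructor
        · intro h; exact absurd h.symm (by simp [Fin.ext_iff]; omega)
        · rintro ⟨-, h⟩; exact absurd rfl h
      · simp [hk, Fin.castSucc_inj]
    -- For c ≠ P j, B c.castSucc = A c
    have hBne : ∀ c : Fin (s + 1), c ≠ P j → B c.castSucc = A c := by
      intro c hc
      rw [hB, hA]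
      simp only
      rw [hBcast c]
      apply Finset.sum_congr
      · ext k
        simp only [Finset.mem_filter, Finset.mem_univ, true_and, and_iff_left_iff_imp]
        rintro hPk rfl
        exact hc (hPk ▸ rfl)
      · intros; rfl
    -- For c = P j : B (P j).castSucc + n j = A (P j)
    have hBj : B (P j).castSucc + n j = A (P j) := by
      rw [hB, hA]
      simp only
      rw [hBcast (P j)]
      have hjmem : j ∈ Finset.univ.filter (fun k => P k = P j) := by simp
      rw [← Finset.sum_erase_add _ _ hjmem]
      congr 1
      apply Finset.sum_congr
      · ext k
        simp only [Finset.mem_filter, Finset.mem_univ, true_and, Finset.mem_erase]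
        tauto
      · intros; rfl
    have hni : n i ≤ B (P j).castSucc := by
      rw [hB]
      simp only
      rw [hBcast (P j)]
      apply Finset.single_le_sum (f := n) (fun _ _ => Nat.zero_le _)
      simp [hPij, hij]
    -- sum of squares comparison
    have hsum2 : (∑ c : Fin (s + 2), B c ^ 2)
        = (∑ c : Fin (s + 1), B c.castSucc ^ 2) + n j ^ 2 := by
      rw [Fin.sum_univ_castSucc, hBlast]
    have hle : ∀ c : Fin (s + 1),
        B c.castSucc ^ 2 + (if c = P j then n j ^ 2 + 2 * (n i * n j) else 0) ≤ A c ^ 2 := by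
      intro c
      by_cases hc : c = P j
      · rw [if_pos hc, hc, ← hBj]
        nlinarith [hni]
      · rw [if_neg hc, hBne c hc]
        simp
    have hfin : (∑ c : Fin (s + 1), B c.castSucc ^ 2) + (n j ^ 2 + 2 * (n i * n j))
        ≤ ∑ c : Fin (s + 1), A c ^ 2 := by
      have := Finset.sum_le_sum (fun c (_ : c ∈ (Finset.univ : Finset (Fin (s + 1)))) => hle c)
      rwa [Finset.sum_add_distrib, Finset.sum_ite_eq' Finset.univ (P j)
        (fun _ => n j ^ 2 + 2 * (n i * n j)), if_pos (Finset.mem_univ _)] at this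
    omega

set_option maxHeartbeats 1000000 in
/-- Proposition: `f(n₁,…,n_r,1,t) ≥ f(n₁,…,n_r,1,t-1) + n_{t-1}²`. -/
theorem stmt0 (r t : ℕ) (ht : 3 ≤ t) (hr : t ≤ r) (n : Fin r → ℕ)
    (hpos : ∀ i, 0 < n i) (hmono : Antitone n) :
    fval r (t - 1) n + (n ⟨t - 2, by omega⟩) ^ 2 ≤ fval r t n := by
  obtain ⟨k, rfl⟩ : ∃ k, t = k + 3 := ⟨t - 3, by omega⟩
  have hne : (Finset.univ.filter
      (fun P : Fin r → Fin (k + 2 - 1) => Function.Surjective P)).Nonempty := by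
    refine ⟨fun x => ⟨min x.val k, by omega⟩, Finset.mem_filter.mpr ⟨Finset.mem_univ _, ?_⟩⟩
    intro c
    refine ⟨⟨c.val, by omega⟩, ?_⟩
    apply Fin.ext
    simp only [Fin.val_mk]
    omega
  obtain ⟨P, hPmem, hPeq⟩ := Finset.exists_mem_eq_sup _ hne (partitionValue n)
  have hPsurj : Function.Surjective P := (Finset.mem_filter.mp hPmem).2
  have hlek : k + 2 ≤ r := by omega
  obtain ⟨x, y, hxy, hgxy⟩ := Fintype.exists_ne_map_eq_of_card_lt
    (fun x : Fin (k + 2) => P (Fin.castLE hlek x)) (by simp)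
  have hij : Fin.castLE hlek x ≠ Fin.castLE hlek y := by
    intro h
    exact hxy (Fin.castLE_injective hlek h)
  obtain ⟨Q, hQsurj, hQge⟩ := key_step n P (Fin.castLE hlek x) (Fin.castLE hlek y) hij hgxy hPsurj
  have hQmem : Q ∈ Finset.univ.filter
      (fun Q : Fin r → Fin (k + 3 - 1) => Function.Surjective Q) :=
    Finset.mem_filter.mpr ⟨Finset.mem_univ _, hQsurj⟩
  have h2 : partitionValue n Q ≤ fval r (k + 3) n := Finset.le_sup hQmem
  have hni : n ⟨k + 1, by omega⟩ ≤ n (Fin.castLE hlek x) := by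
    apply hmono
    simp only [Fin.le_def, Fin.coe_castLE, Fin.val_mk]
    omega
  have hnj : n ⟨k + 1, by omega⟩ ≤ n (Fin.castLE hlek y) := by
    apply hmono
    simp only [Fin.le_def, Fin.coe_castLE, Fin.val_mk]
    omega
  have hsq : (n ⟨k + 1, by omega⟩ : ℕ) ^ 2
      ≤ n (Fin.castLE hlek x) * n (Fin.castLE hlek y) := by
    rw [sq]
    exact Nat.mul_le_mul hni hnj
  have h0 : fval r (k + 2) n = partitionValue n P := hPeq
  show fval r (k + 2) n + (n ⟨k + 1, by omega⟩) ^ 2 ≤ fval r (k + 3) n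
  rw [h0]
  calc partitionValue n P + (n ⟨k + 1, by omega⟩) ^ 2
      ≤ partitionValue n P + n (Fin.castLE hlek x) * n (Fin.castLE hlek y) := by
        exact Nat.add_le_add_left hsq _
    _ ≤ partitionValue n Q := hQge
    _ ≤ fval r (k + 3) n := h2
end

section
/- Let $m \geq 1$, let $u_1,\ldots,u_m$ be nonnegative reals and $N$ a positive real with $N \leq \sum_{i=1}^m u_i$. If $0 < \epsilon < (1/m)^{10^m}$, then there exists $\eta \in [\epsilon, \epsilon^{1/10^m}]$ such that for every $i \in [m]$, either $u_i < \eta N$ or $u_i \geq \eta^{1/10} N$. -/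
/-!
The scales `ε ^ (1 / 10 ^ k)`, `k = 0, …, m`, increase, and each is the tenth power of the next,
so the `m` windows `[ε ^ (1 / 10 ^ k) N, ε ^ (1 / 10 ^ (k + 1)) N)` are disjoint. The largest
`uᵢ` is at least `N / m`, which exceeds the top scale `ε ^ (1 / 10 ^ m) N`, so at most `m - 1`
of the `uᵢ` fall into the windows and, by pigeonhole, some window contains none of them.
-/

open Finset

theorem exists_gap_of_monotone {ι α : Type*} [Fintype ι] [LinearOrder α] (u : ι → α)
    {t : ℕ → α} (ht : Monotone t) (htop : ∃ i, t (Fintype.card ι) ≤ u i) :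
    ∃ k < Fintype.card ι, ∀ i, u i < t k ∨ t (k + 1) ≤ u i := by
  classical
  by_contra! hhit
  obtain ⟨i₀, hi₀⟩ := htop
  choose c hc using fun k : Fin (Fintype.card ι) => hhit k k.isLt
  have hc_strictMono : StrictMono (u ∘ c) := fun k j hkj =>
    (hc k).2.trans_le <| (ht (Nat.succ_le_of_lt hkj)).trans (hc j).1
  have hc_ne : ∀ k, c k ≠ i₀ := fun k hk =>
    ((hc k).2.trans_le <| (ht k.isLt).trans hi₀).ne (by rw [hk])
  have hcard := Fintype.card_le_of_injective (fun k => (⟨c k, hc_ne k⟩ : {i // i ≠ i₀}))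
    fun k j hkj => hc_strictMono.injective.of_comp (congrArg Subtype.val hkj)
  rw [Fintype.card_fin, Fintype.card_subtype_compl, Fintype.card_subtype_eq] at hcard
  have : 0 < Fintype.card ι := Fintype.card_pos_iff.mpr ⟨i₀⟩
  omega

theorem Finset.exists_div_card_le_of_le_sum {ι : Type*} {s : Finset ι} (hs : s.Nonempty)
    {u : ι → ℝ} {N : ℝ} (hN : N ≤ ∑ i ∈ s, u i) : ∃ i ∈ s, N / #s ≤ u i := by
  refine exists_le_of_sum_le hs ?_
  rwa [sum_const, nsmul_eq_mul, mul_div_cancel₀ _ (by exact_mod_cast hs.card_ne_zero)]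

section Scales

variable {ε : ℝ}

theorem monotone_rpow_one_div_ten_pow (hε : 0 < ε) (hε₁ : ε ≤ 1) :
    Monotone fun k : ℕ => ε ^ ((1 : ℝ) / 10 ^ k) := fun _ _ hkj =>
  Real.rpow_le_rpow_of_exponent_ge hε hε₁ <|
    one_div_le_one_div_of_le (by positivity) (pow_le_pow_right₀ (by norm_num) hkj)

theorem rpow_one_div_ten_pow_rpow_one_div_ten (hε : 0 ≤ ε) (k : ℕ) :
    (ε ^ ((1 : ℝ) / 10 ^ k)) ^ ((1 : ℝ) / 10) = ε ^ ((1 : ℝ) / 10 ^ (k + 1)) := by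
  rw [← Real.rpow_mul hε, pow_succ, one_div_mul_one_div]

theorem rpow_one_div_ten_pow_lt_of_lt_pow {x : ℝ} (hε : 0 ≤ ε) (hx : 0 ≤ x) (k : ℕ)
    (hεx : ε < x ^ (10 ^ k)) : ε ^ ((1 : ℝ) / 10 ^ k) < x := by
  have h := Real.rpow_lt_rpow hε hεx (by positivity : (0 : ℝ) < ((10 ^ k : ℕ) : ℝ)⁻¹)
  rwa [Real.pow_rpow_inv_natCast hx (by positivity), Nat.cast_pow, Nat.cast_ofNat,
    ← one_div] at h

end Scales

theorem stmt1_general (m : ℕ) (u : Fin m → ℝ)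
    (N : ℝ) (hN : 0 < N) (hNle : N ≤ ∑ i, u i)
    (ε : ℝ) (hε : 0 < ε) (hεm : ε < (1 / (m : ℝ)) ^ (10 ^ m)) :
    ∃ η : ℝ, ε ≤ η ∧ η ≤ ε ^ ((1 : ℝ) / 10 ^ m) ∧
      ∀ i, u i < η * N ∨ η ^ ((1 : ℝ) / 10) * N ≤ u i := by
  have hm : 0 < m := Nat.pos_of_ne_zero fun h => by subst h; simp only [univ_eq_empty, sum_empty] at hNle; linarith
  have hε₁ : ε ≤ 1 := hεm.le.trans <|
    pow_le_one₀ (by positivity) (div_le_one_of_le₀ (by exact_mod_cast hm) (by positivity))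
  have hmono := monotone_rpow_one_div_ten_pow hε hε₁
  obtain ⟨i₀, -, hi₀⟩ := exists_div_card_le_of_le_sum (univ_nonempty_iff.mpr ⟨⟨0, hm⟩⟩) hNle
  have htop : ε ^ ((1 : ℝ) / 10 ^ m) * N ≤ u i₀ := calc
    ε ^ ((1 : ℝ) / 10 ^ m) * N ≤ 1 / m * N := by
      gcongr
      exact (rpow_one_div_ten_pow_lt_of_lt_pow hε.le (by positivity) m hεm).le
    _ ≤ u i₀ := by simpa [div_eq_inv_mul] using hi₀
  obtain ⟨k, hk, hgap⟩ := exists_gap_of_monotone u (hmono.mul_const hN.le)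
    ⟨i₀, by simpa using htop⟩
  rw [Fintype.card_fin] at hk
  refine ⟨ε ^ ((1 : ℝ) / 10 ^ k), by simpa using hmono k.zero_le, hmono hk.le, fun i => ?_⟩
  rw [rpow_one_div_ten_pow_rpow_one_div_ten hε.le]
  exact hgap i

/-- Gap lemma: if `N ≤ ∑ uᵢ` and `ε < (1/m)^(10^m)`, there is a scale
`η ∈ [ε, ε^(1/10^m)]` such that every `uᵢ` is either below `ηN` or at least `η^(1/10) N`. -/
theorem stmt1 (m : ℕ) (hm : 1 ≤ m) (u : Fin m → ℝ) (hu : ∀ i, 0 ≤ u i)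
    (N : ℝ) (hN : 0 < N) (hNle : N ≤ ∑ i, u i)
    (ε : ℝ) (hε : 0 < ε) (hεm : ε < (1 / (m : ℝ)) ^ (10 ^ m)) :
    ∃ η : ℝ, ε ≤ η ∧ η ≤ ε ^ ((1 : ℝ) / 10 ^ m) ∧
      ∀ i, u i < η * N ∨ η ^ ((1 : ℝ) / 10) * N ≤ u i :=
  stmt1_general m u N hN hNle ε hε hεm
end

section
/- Let $F$ be a graph with chromatic number at least 3, and let $G$ be an $F$-free graph. Suppose $A$ and $B$ are two disjoint independent sets of $G$ with $|B| \geq |V(F)|$. Let $X = N_G[B] \setminus A$ be the set of common neighbours of $B$ in $G$, minus $A$. Let $G_{A \to X}$ be the graph obtained from $G$ by deleting all edges incident with $A$ and adding all edges between $A$ and $X$. Then $G_{A \to X}$ is also $F$-free. -/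
/-- `G` contains a copy of `F` (a subgraph isomorphic to `F`). -/
def ContainsCopy {V β : Type*} (G : SimpleGraph V) (F : SimpleGraph β) : Prop :=
  ∃ f : β ↪ V, ∀ a b, F.Adj a b → G.Adj (f a) (f b)

/-- The graph `G_{A → X}` where `X = N_G[B] \ A` is the set of common neighbours of `B`
minus `A`: delete all edges incident with `A` and add all edges between `A` and `X`. -/
def shiftGraph {V : Type*} (G : SimpleGraph V) (A B : Set V) : SimpleGraph V where
  Adj u v := (u ∉ A ∧ v ∉ A ∧ G.Adj u v) ∨
    (u ∈ A ∧ v ∉ A ∧ ∀ b ∈ B, G.Adj v b) ∨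
    (v ∈ A ∧ u ∉ A ∧ ∀ b ∈ B, G.Adj u b)
  symm := by
    constructor
    intro u v h
    rcases h with ⟨h1, h2, h3⟩ | ⟨h1, h2, h3⟩ | ⟨h1, h2, h3⟩
    · exact Or.inl ⟨h2, h1, h3.symm⟩
    · exact Or.inr (Or.inr ⟨h1, h2, h3⟩)
    · exact Or.inr (Or.inl ⟨h1, h2, h3⟩)
  loopless := by
    constructor
    intro v h
    rcases h with ⟨_, _, h⟩ | ⟨h1, h2, _⟩ | ⟨h1, h2, _⟩
    · exact G.irrefl h
    · exact h2 h1
    · exact h2 h1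

/-!
In `G_{A → X}` the set `A` is independent, the edges avoiding `A` are those of `G`, and every
neighbour of a vertex of `A` is adjacent in `G` to all of `B`. So in a copy of `F` in `G_{A → X}`
the vertices landing in `A` can be moved to distinct vertices of `B` not used by the rest of the
copy (there is room since `|B| ≥ |V(F)|`), and this gives a copy of `F` in `G`.
-/

open Set

theorem exists_embedding_eqOn_compl_mapsTo_of_card_le {β V : Type*} [Finite β] (f : β ↪ V)
    (S : Set β) {B : Set V} (hB : Nat.card β ≤ B.ncard) :
    ∃ g : β ↪ V, EqOn g f Sᶜ ∧ MapsTo g S B := by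
  classical
  rcases S.eq_empty_or_nonempty with rfl | ⟨x, -⟩
  · exact ⟨f, fun _ _ ↦ rfl, mapsTo_empty _ _⟩
  have : Nonempty V := ⟨f x⟩
  set T := B \ f '' Sᶜ
  have hST : S.encard ≤ T.encard := by
    have hSc : Sᶜ.encard ≠ ⊤ := encard_ne_top_iff.mpr (toFinite _)
    rw [← ENat.add_le_add_iff_right hSc]
    calc S.encard + Sᶜ.encard = Nat.card β := by
          rw [encard_add_encard_compl, encard_univ, ENat.card_eq_coe_natCard]
      _ ≤ B.ncard := by exact_mod_cast hB
      _ ≤ B.encard := by rw [ncard_def]; exact ENat.natCast_toNat_le_self _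
      _ ≤ T.encard + (f '' Sᶜ).encard := encard_le_encard_sdiff_add_encard _ _
      _ = T.encard + Sᶜ.encard := by rw [f.injective.injOn.encard_image]
  obtain ⟨h, hhT, hinj⟩ := (toFinite S).exists_injOn_of_encard_le hST
  have hg : Function.Injective (S.piecewise h f) :=
    (injective_piecewise_iff S).mpr ⟨hinj, f.injective.injOn, fun x hx y hy hxy ↦
      (hhT hx).2 ⟨y, hy, hxy.symm⟩⟩
  exact ⟨⟨_, hg⟩, piecewise_eqOn_compl S h f,
    fun x hx ↦ by simpa [piecewise_eqOn S h f hx] using (hhT hx).1⟩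

theorem adj_of_shiftGraph_adj {V : Type*} {G : SimpleGraph V} {A B : Set V} {u v u' v' : V}
    (huv : (shiftGraph G A B).Adj u v) (hu : u ∉ A → u' = u) (hu' : u ∈ A → u' ∈ B)
    (hv : v ∉ A → v' = v) (hv' : v ∈ A → v' ∈ B) : G.Adj u' v' := by
  rcases huv with ⟨huA, hvA, h⟩ | ⟨huA, hvA, h⟩ | ⟨hvA, huA, h⟩
  · rwa [hu huA, hv hvA]
  · rw [hv hvA]; exact (h _ (hu' huA)).symm
  · rw [hu huA]; exact h _ (hv' hvA)

theorem ContainsCopy.of_shiftGraph {V β : Type*} [Finite β] {F : SimpleGraph β}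
    {G : SimpleGraph V} {A B : Set V} (hB : Nat.card β ≤ B.ncard)
    (h : ContainsCopy (shiftGraph G A B) F) : ContainsCopy G F := by
  obtain ⟨f, hf⟩ := h
  obtain ⟨g, hgf, hgB⟩ := exists_embedding_eqOn_compl_mapsTo_of_card_le f (f ⁻¹' A) hB
  exact ⟨g, fun a b hab ↦ adj_of_shiftGraph_adj (hf a b hab) (fun ha ↦ hgf ha)
    (fun ha ↦ hgB ha) (fun hb ↦ hgf hb) (fun hb ↦ hgB hb)⟩

theorem stmt2_general {V β : Type*} [Fintype β] (F : SimpleGraph β)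
    (G : SimpleGraph V) (hGF : ¬ ContainsCopy G F)
    (A B : Set V)
    (hBcard : Fintype.card β ≤ B.ncard) :
    ¬ ContainsCopy (shiftGraph G A B) F :=
  fun h ↦ hGF (h.of_shiftGraph (Nat.card_eq_fintype_card (α := β) ▸ hBcard))

/-- Proposition: if `G` is `F`-free, `χ(F) ≥ 3`, `A, B` are disjoint independent sets
with `|B| ≥ |V(F)|`, then `G_{A → X}` is still `F`-free, where `X = N_G[B] \ A`. -/
theorem stmt2 {V β : Type*} [Fintype β] (F : SimpleGraph β)
    (hχ : 3 ≤ F.chromaticNumber)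
    (G : SimpleGraph V) (hGF : ¬ ContainsCopy G F)
    (A B : Set V) (hAB : Disjoint A B)
    (hA : ∀ a ∈ A, ∀ a' ∈ A, ¬ G.Adj a a')
    (hB : ∀ b ∈ B, ∀ b' ∈ B, ¬ G.Adj b b')
    (hBcard : Fintype.card β ≤ B.ncard) :
    ¬ ContainsCopy (shiftGraph G A B) F :=
  stmt2_general F G hGF A B hBcard
end

section
/- Let $r \geq t \geq 3$ and let $K = K_{n_1,\ldots,n_r}$ be a complete $r$-partite graph with parts $V_1,\ldots,V_r$ of sizes $n_1 \geq \cdots \geq n_r$. Then the maximum number of edges of a $K_t$-free spanning subgraph of $K$ equals $f(n_1,\ldots,n_r,1,t) = \max_{\mathcal{P}} \sum_{I \neq I' \in \mathcal{P}} n_I n_{I'}$, where the maximum runs over partitions $\mathcal{P}$ of $[r]$ into $t-1$ parts and $n_I = \sum_{i\in I} n_i$. -/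
/-- The complete `r`-partite graph `K_{n₁,…,n_r}` with classes `V_i = {i} × Fin (n i)`. -/
def completeMultipartite {r : ℕ} (n : Fin r → ℕ) : SimpleGraph (Σ i : Fin r, Fin (n i)) where
  Adj u v := u.1 ≠ v.1
  symm := ⟨fun _ _ h => h.symm⟩
  loopless := ⟨fun _ h => h rfl⟩

/-!
Averaging over the transversals `x` (one vertex `x i` from each class) gives
`(∏ nᵢ) · e(G) = ∑ₓ ∑_{ij} nᵢ nⱼ`, the inner sum running over the edges `ij` of the `K_t`-free
graph that `G` induces on `{(i, x i)}`, viewed as a graph on `[r]` with vertex weights `nᵢ`.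
For such a weighted graph, Erdős's degree argument bounds the weighted edge count by that of a
complete `(t-1)`-partite graph: take a vertex `v` of maximal weighted degree, recurse into its
neighbourhood (which is `K_{t-1}`-free) and make the non-neighbours a new class. Splitting classes
until there are exactly `t - 1` only adds edges. Blowing up the optimal partition gives the matching
construction.

Weighted edge counts are written `w ⬝ᵥ H.adjMatrix ℕ *ᵥ w`, which counts every edge twice.
-/

open Finset Fintype Function SimpleGraph Matrix

section PiCount
variable {ι R : Type*} [DecidableEq ι] [Fintype ι] {β : ι → Type*} [∀ i, Fintype (β i)]
  [CommSemiring R]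

theorem Fintype.sum_pi_apply_mul_card (i : ι) (g : β i → R) :
    (∑ x : ∀ k, β k, g (x i)) * card (β i) = card (∀ k, β k) * ∑ a, g a := by
  rw [Fintype.card_congr (Equiv.piSplitAt i β), Fintype.card_prod,
    Fintype.sum_equiv (Equiv.piSplitAt i β) (fun x => g (x i)) (fun p => g p.1) (fun _ => rfl),
    Fintype.sum_prod_type]
  simp only [Finset.sum_const, Finset.card_univ, nsmul_eq_mul, ← Finset.mul_sum]
  push_cast
  ring

theorem Fintype.sum_pi_apply_apply_mul_card {i j : ι} (hij : i ≠ j) (F : β i → β j → R) :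
    (∑ x : ∀ k, β k, F (x i) (x j)) * (card (β i) * card (β j))
      = card (∀ k, β k) * ∑ a, ∑ b, F a b := by
  have hsplit : ∑ x : ∀ k, β k, F (x i) (x j)
      = ∑ a, ∑ y : ∀ k : {k // k ≠ i}, β k, F a (y ⟨j, hij.symm⟩) := by
    rw [← Fintype.sum_prod_type']
    exact Fintype.sum_equiv (Equiv.piSplitAt i β) _ _ (fun _ => rfl)
  have hinner (a : β i) := Fintype.sum_pi_apply_mul_card (β := fun k : {k // k ≠ i} => β k)
    ⟨j, hij.symm⟩ (F a)
  rw [hsplit, Fintype.card_congr (Equiv.piSplitAt i β), Fintype.card_prod]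
  calc (∑ a, ∑ y : ∀ k : {k // k ≠ i}, β k, F a (y ⟨j, hij.symm⟩)) * (card (β i) * card (β j))
      = card (β i) * ∑ a, (∑ y : ∀ k : {k // k ≠ i}, β k, F a (y ⟨j, hij.symm⟩)) * card (β j) := by
        rw [Finset.sum_mul, Finset.mul_sum]
        exact Finset.sum_congr rfl fun _ _ => by ring
    _ = _ := by
        simp only [hinner, ← Finset.mul_sum]
        push_cast
        ring

end PiCount

theorem Finset.sum_fiberwise_apply {ι κ M : Type*} [Fintype ι] [Fintype κ] [DecidableEq κ]
    [AddCommMonoid M] (g : ι → κ) (f : κ → ι → M) :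
    ∑ j, ∑ i with g i = j, f j i = ∑ i, f (g i) i := by
  rw [← Finset.sum_fiberwise univ g (fun i => f (g i) i)]
  exact sum_congr rfl fun j _ => sum_congr rfl fun i hi => by rw [(mem_filter.1 hi).2]

theorem Finset.sum_sum_ite_ne_eq_two_nsmul {κ M : Type*} [Fintype κ] [LinearOrder κ]
    [AddCommMonoid M] (f : κ → κ → M) (hf : ∀ a b, f a b = f b a) :
    ∑ a, ∑ b, (if a ≠ b then f a b else 0) = 2 • ∑ p : κ × κ with p.1 < p.2, f p.1 p.2 := by
  have hsplit (a b : κ) : (if a ≠ b then f a b else 0)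
      = (if a < b then f a b else 0) + if b < a then f b a else 0 := by
    rcases lt_trichotomy a b with h | rfl | h
    · simp [h, h.ne, h.not_gt]
    · simp
    · simp [h, h.ne', h.not_gt, hf a b]
  simp only [hsplit, Finset.sum_add_distrib]
  rw [Finset.sum_comm (f := fun a b => if b < a then f b a else 0), two_nsmul, Finset.sum_filter,
    Fintype.sum_prod_type]

theorem Fintype.exists_surjective_refining {α β : Type*} [Fintype α] [DecidableEq α] [Fintype β]
    [DecidableEq β] (f : α → β) (h : card β ≤ card α) :
    ∃ g : α → β, Surjective g ∧ ∀ a a', g a = g a' → f a = f a' := by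
  obtain ⟨g, hg, hmax⟩ := (univ.filter fun g : α → β => ∀ a a', g a = g a' → f a = f a')
    |>.exists_max_image (fun g => #(univ.image g)) ⟨f, by simp⟩
  rw [mem_filter] at hg
  refine ⟨g, fun b₀ => ?_, hg.2⟩
  by_contra! hb₀
  have hb₀' : b₀ ∉ univ.image g := by simpa using hb₀
  obtain ⟨a, -, a', -, hne, heq⟩ : ∃ a ∈ univ, ∃ a' ∈ univ, a ≠ a' ∧ g a = g a' := by
    refine exists_ne_map_eq_of_card_lt_of_maps_to (t := univ.image g) ?_ (by simp)
    calc #(univ.image g) < #(univ : Finset β) :=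
          card_lt_card ⟨subset_univ _, fun hs => hb₀' (hs (mem_univ _))⟩
      _ ≤ _ := by simpa using h
  -- Moving `a` into the missed value `b₀` refines `g` and enlarges its image.
  set g' := update g a b₀
  have hg' : ∀ u v, g' u = g' v → g u = g v := by
    intro u v huv
    by_cases hu : u = a <;> by_cases hv : v = a
    · rw [hu, hv]
    · simp only [g', hu, update_self, update_of_ne hv] at huv
      exact absurd huv.symm (hb₀ v)
    · simp only [g', hv, update_self, update_of_ne hu] at huv
      exact absurd huv (hb₀ u)
    · simpa [g', hu, hv] using huv
  have hgrow : insert b₀ (univ.image g) ⊆ univ.image g' := by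
    intro b hb
    simp only [mem_insert, mem_image, mem_univ, true_and] at hb ⊢
    rcases hb with rfl | ⟨c, rfl⟩
    · exact ⟨a, by simp [g']⟩
    · by_cases hc : c = a
      · exact ⟨a', by simp [g', hne.symm, hc, heq]⟩
      · exact ⟨c, by simp [g', hc]⟩
  have hle := hmax g' (by simpa using fun u v huv => hg.2 u v (hg' u v huv))
  have hge := card_le_card hgrow
  rw [card_insert_of_notMem hb₀'] at hge
  omega

namespace SimpleGraph

section Weighted
variable {V : Type*} [Fintype V] (H : SimpleGraph V) [DecidableRel H.Adj]

theorem dotProduct_mulVec_adjMatrix_comm {R : Type*} [CommSemiring R] (u v : V → R) :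
    u ⬝ᵥ H.adjMatrix R *ᵥ v = v ⬝ᵥ H.adjMatrix R *ᵥ u := by
  rw [dotProduct_mulVec, ← mulVec_transpose, transpose_adjMatrix, dotProduct_comm]

theorem dotProduct_mulVec_adjMatrix_mono {H' : SimpleGraph V} [DecidableRel H'.Adj] (h : H ≤ H')
    (w : V → ℕ) : w ⬝ᵥ H.adjMatrix ℕ *ᵥ w ≤ w ⬝ᵥ H'.adjMatrix ℕ *ᵥ w := by
  simp only [dotProduct_mulVec_adjMatrix]
  refine sum_le_sum fun i _ => sum_le_sum fun j _ => ?_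
  split_ifs with hH hH'
  · exact le_rfl
  · exact absurd (h hH) hH'
  · exact Nat.zero_le _
  · exact le_rfl

theorem dotProduct_mulVec_adjMatrix_comap {α R : Type*} [Fintype α] [DecidableEq V]
    [CommSemiring R] (P : α → V) (w : α → R) :
    w ⬝ᵥ (H.comap P).adjMatrix R *ᵥ w
      = (fun b => ∑ i with P i = b, w i) ⬝ᵥ H.adjMatrix R *ᵥ (fun b => ∑ i with P i = b, w i) := by
  simp only [dotProduct_mulVec_adjMatrix, comap_adj, Finset.sum_mul_sum, ite_sum_zero]
  rw [Finset.sum_congr rfl fun a _ => Finset.sum_comm]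
  simp only [Finset.sum_fiberwise_apply]

theorem dotProduct_mulVec_adjMatrix_le_indicator_neighborSet (w : V → ℕ) (x : V)
    (hx : ∀ i, w i ≠ 0 → (H.adjMatrix ℕ *ᵥ w) i ≤ (H.adjMatrix ℕ *ᵥ w) x) :
    w ⬝ᵥ H.adjMatrix ℕ *ᵥ w
      ≤ (H.neighborSet x).indicator w ⬝ᵥ H.adjMatrix ℕ *ᵥ (H.neighborSet x).indicator w
        + 2 * ((∑ i, (H.neighborSet x).indicator w i) * ∑ i, (H.neighborSet x)ᶜ.indicator w i) := by
  set M := H.adjMatrix ℕ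
  set a := (H.neighborSet x).indicator w
  set b := (H.neighborSet x)ᶜ.indicator w
  have hw : w = a + b := (Set.indicator_self_add_compl _ w).symm
  have hdeg : (M *ᵥ w) x = ∑ i, a i := by
    rw [adjMatrix_mulVec_apply, ← Finset.sum_indicator_subset w (subset_univ _)]
    simp [a]
  have hb : b ⬝ᵥ M *ᵥ w ≤ (∑ i, b i) * ∑ i, a i := by
    rw [← hdeg, Finset.sum_mul]
    refine Finset.sum_le_sum fun i _ => ?_
    by_cases hi : w i = 0
    · simp [b, Set.indicator_apply, hi]
    · exact Nat.mul_le_mul_left _ (hx i hi)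
  have hexpand : w ⬝ᵥ M *ᵥ w = a ⬝ᵥ M *ᵥ a + b ⬝ᵥ M *ᵥ a + b ⬝ᵥ M *ᵥ w := by
    rw [hw, add_dotProduct, mulVec_add, dotProduct_add, dotProduct_add,
      dotProduct_mulVec_adjMatrix_comm H a b]
  have hba : b ⬝ᵥ M *ᵥ a ≤ b ⬝ᵥ M *ᵥ w := by
    rw [hw, mulVec_add, dotProduct_add]
    exact Nat.le_add_right _ _
  linarith

theorem dotProduct_mulVec_adjMatrix_comap_top_piecewise {m : ℕ} (s : Set V)
    [DecidablePred (· ∈ s)] (Q : V → Fin m) (w : V → ℕ) :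
    w ⬝ᵥ ((⊤ : SimpleGraph (Fin (m + 1))).comap
        (fun i => if i ∈ s then (Q i).castSucc else Fin.last m)).adjMatrix ℕ *ᵥ w
      = s.indicator w ⬝ᵥ ((⊤ : SimpleGraph (Fin m)).comap Q).adjMatrix ℕ *ᵥ s.indicator w
        + 2 * ((∑ i, s.indicator w i) * ∑ i, sᶜ.indicator w i) := by
  have hterm (i j : V) :
      (if ((⊤ : SimpleGraph (Fin (m + 1))).comap
          (fun i => if i ∈ s then (Q i).castSucc else Fin.last m)).Adj i j then w i * w j else 0)
        = (if ((⊤ : SimpleGraph (Fin m)).comap Q).Adj i j then s.indicator w i * s.indicator w j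
            else 0)
          + s.indicator w i * sᶜ.indicator w j + sᶜ.indicator w i * s.indicator w j := by
    by_cases hi : i ∈ s <;> by_cases hj : j ∈ s <;>
      simp [hi, hj, Fin.castSucc_ne_last, (Fin.castSucc_ne_last _).symm]
  simp only [dotProduct_mulVec_adjMatrix, hterm, Finset.sum_add_distrib, ← Finset.sum_mul_sum]
  ring

/-- Weighted Turán theorem. Cliques are forbidden only on the support of `w`, so that the
induction can pass to the neighbourhood of a vertex by setting the other weights to zero. -/
theorem exists_dotProduct_mulVec_adjMatrix_le_comap_top [DecidableEq V] (m : ℕ) (w : V → ℕ)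
    (hw : H.CliqueFreeOn (Function.support w) (m + 2)) :
    ∃ P : V → Fin (m + 1), w ⬝ᵥ H.adjMatrix ℕ *ᵥ w
      ≤ w ⬝ᵥ ((⊤ : SimpleGraph (Fin (m + 1))).comap P).adjMatrix ℕ *ᵥ w := by
  induction m generalizing w with
  | zero =>
    refine ⟨fun _ => 0, le_of_eq_of_le ?_ (Nat.zero_le _)⟩
    rw [cliqueFreeOn_two] at hw
    rw [dotProduct_mulVec_adjMatrix]
    refine Finset.sum_eq_zero fun i _ => Finset.sum_eq_zero fun j _ => ?_
    split_ifs with hij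
    · by_contra hne
      exact hw (left_ne_zero_of_mul hne) (right_ne_zero_of_mul hne) hij.ne hij
    · rfl
  | succ m ih =>
    obtain hsupp | ⟨x, hx, hmax⟩ := (univ.filter (w · ≠ 0)).eq_empty_or_nonempty.imp id
      (exists_max_image _ (H.adjMatrix ℕ *ᵥ w))
    · have : w = 0 := funext fun i => by
        simpa using Finset.filter_eq_empty_iff.mp hsupp (mem_univ i)
      exact ⟨fun _ => 0, by simp [this]⟩
    have hxw : x ∈ Function.support w := by simpa using hx
    obtain ⟨Q, hQ⟩ := ih ((H.neighborSet x).indicator w) <| by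
      rw [Set.support_indicator, Set.inter_comm]
      exact CliqueFreeOn.of_succ H hw hxw
    refine ⟨fun i => if i ∈ H.neighborSet x then (Q i).castSucc else Fin.last (m + 1), ?_⟩
    rw [dotProduct_mulVec_adjMatrix_comap_top_piecewise]
    refine (H.dotProduct_mulVec_adjMatrix_le_indicator_neighborSet w x fun i hi => ?_).trans
      (by gcongr)
    exact hmax i (by simpa using hi)

end Weighted

theorem two_mul_ncard_edgeSet {V : Type*} [Fintype V] (G : SimpleGraph V) [DecidableRel G.Adj] :
    2 * G.edgeSet.ncard = ∑ u, ∑ v, if G.Adj u v then 1 else 0 := by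
  rw [← coe_edgeFinset, Set.ncard_coe_finset, two_mul_card_edgeFinset, Finset.card_filter,
    Fintype.sum_prod_type]

section Transversal
variable {ι : Type*} [Fintype ι] [DecidableEq ι] {β : ι → Type*} [∀ i, Fintype (β i)]

theorem card_pi_mul_two_mul_ncard_edgeSet (G : SimpleGraph (Σ i, β i)) [DecidableRel G.Adj]
    (hG : G ≤ completeMultipartiteGraph β) :
    card (∀ i, β i) * (2 * G.edgeSet.ncard)
      = ∑ x : ∀ i, β i, (fun i => card (β i)) ⬝ᵥ
          (G.comap fun i => ⟨i, x i⟩).adjMatrix ℕ *ᵥ (fun i => card (β i)) := by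
  simp only [two_mul_ncard_edgeSet, dotProduct_mulVec_adjMatrix, comap_adj, Fintype.sum_sigma]
  conv_rhs => rw [Finset.sum_comm]
  rw [Finset.mul_sum]
  refine Finset.sum_congr rfl fun i _ => ?_
  conv_rhs => rw [Finset.sum_comm]
  rw [Finset.sum_comm, Finset.mul_sum]
  refine Finset.sum_congr rfl fun j _ => ?_
  obtain rfl | hij := eq_or_ne i j
  · have hdiag (a b : β i) : ¬ G.Adj ⟨i, a⟩ ⟨i, b⟩ := fun h => hG h rfl
    simp [hdiag]
  · have key := Fintype.sum_pi_apply_apply_mul_card (R := ℕ) hij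
      (fun a b => if G.Adj ⟨i, a⟩ ⟨j, b⟩ then 1 else 0)
    simp only [Nat.cast_id, Finset.sum_mul, ite_mul, one_mul, zero_mul] at key
    rw [← key]

theorem two_mul_ncard_edgeSet_comap_sigmaFst [∀ i, Nonempty (β i)] (H : SimpleGraph ι)
    [DecidableRel H.Adj] :
    2 * (H.comap (Sigma.fst : (Σ i, β i) → ι)).edgeSet.ncard
      = (fun i => card (β i)) ⬝ᵥ H.adjMatrix ℕ *ᵥ (fun i => card (β i)) := by
  have h := card_pi_mul_two_mul_ncard_edgeSet (H.comap (Sigma.fst : (Σ i, β i) → ι))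
    fun _ _ huv => H.ne_of_adj huv
  refine Nat.eq_of_mul_eq_mul_left (card_pos (α := ∀ i, β i)) ?_
  rw [h, ← Finset.card_univ]
  exact Finset.sum_const_nat fun _ _ => rfl

end Transversal

end SimpleGraph

theorem two_mul_partitionValue {r s : ℕ} (n : Fin r → ℕ) (P : Fin r → Fin s) :
    2 * partitionValue n P = n ⬝ᵥ ((⊤ : SimpleGraph (Fin s)).comap P).adjMatrix ℕ *ᵥ n := by
  rw [dotProduct_mulVec_adjMatrix_comap, dotProduct_mulVec_adjMatrix]
  simp only [top_adj]
  rw [Finset.sum_sum_ite_ne_eq_two_nsmul _ fun a b => Nat.mul_comm _ _, smul_eq_mul]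
  rfl

theorem SimpleGraph.dotProduct_mulVec_adjMatrix_le_two_mul_fval {r m : ℕ} (hm : m + 1 ≤ r)
    (n : Fin r → ℕ) (H : SimpleGraph (Fin r)) [DecidableRel H.Adj] (hH : H.CliqueFree (m + 2)) :
    n ⬝ᵥ H.adjMatrix ℕ *ᵥ n ≤ 2 * fval r (m + 2) n := by
  obtain ⟨P, hP⟩ := H.exists_dotProduct_mulVec_adjMatrix_le_comap_top m n hH.cliqueFreeOn
  obtain ⟨Q, hQ, hPQ⟩ := Fintype.exists_surjective_refining P (by simpa using hm)
  calc n ⬝ᵥ H.adjMatrix ℕ *ᵥ n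
      ≤ n ⬝ᵥ ((⊤ : SimpleGraph (Fin (m + 1))).comap P).adjMatrix ℕ *ᵥ n := hP
    _ ≤ n ⬝ᵥ ((⊤ : SimpleGraph (Fin (m + 1))).comap Q).adjMatrix ℕ *ᵥ n :=
        dotProduct_mulVec_adjMatrix_mono _
          (fun i j (hPij : P i ≠ P j) hQij => hPij (hPQ i j hQij)) n
    _ = 2 * partitionValue n Q := (two_mul_partitionValue n Q).symm
    _ ≤ 2 * fval r (m + 2) n := Nat.mul_le_mul_left 2 (Finset.le_sup (by simpa using hQ))

theorem exists_cliqueFree_le_completeMultipartite_ncard_edgeSet_eq_fval {r m : ℕ}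
    (hm : m + 1 ≤ r) (n : Fin r → ℕ) (hpos : ∀ i, 0 < n i) :
    ∃ G ≤ completeMultipartite n, G.CliqueFree (m + 2) ∧ G.edgeSet.ncard = fval r (m + 2) n := by
  have : ∀ i, Nonempty (Fin (n i)) := fun i => ⟨⟨0, hpos i⟩⟩
  obtain ⟨P₀, hP₀, -⟩ := Fintype.exists_surjective_refining (fun _ : Fin r => (0 : Fin (m + 1)))
    (by simpa using hm)
  obtain ⟨P, -, hP⟩ := Finset.exists_mem_eq_sup
    (univ.filter fun P : Fin r → Fin (m + 1) => Surjective P) ⟨P₀, by simpa using hP₀⟩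
    (partitionValue n)
  have hfval : fval r (m + 2) n = partitionValue n P := hP
  refine ⟨((⊤ : SimpleGraph (Fin (m + 1))).comap P).comap Sigma.fst,
    fun u v huv h => huv (congrArg P h), ?_, ?_⟩
  · exact Colorable.cliqueFree ⟨Coloring.mk (fun v => P v.1) fun h => h⟩ (Nat.lt_succ_self _)
  · have h := two_mul_ncard_edgeSet_comap_sigmaFst (β := fun i => Fin (n i))
      ((⊤ : SimpleGraph (Fin (m + 1))).comap P)
    simp only [Fintype.card_fin, ← two_mul_partitionValue] at h
    rw [hfval]
    exact Nat.eq_of_mul_eq_mul_left two_pos h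

theorem ncard_edgeSet_le_fval {r m : ℕ} (hm : m + 1 ≤ r) (n : Fin r → ℕ) (hpos : ∀ i, 0 < n i)
    (G : SimpleGraph (Σ i : Fin r, Fin (n i))) (hG : G ≤ completeMultipartite n)
    (hcf : G.CliqueFree (m + 2)) : G.edgeSet.ncard ≤ fval r (m + 2) n := by
  classical
  have : ∀ i, Nonempty (Fin (n i)) := fun i => ⟨⟨0, hpos i⟩⟩
  have h := card_pi_mul_two_mul_ncard_edgeSet G hG
  have hx (x : ∀ i, Fin (n i)) := dotProduct_mulVec_adjMatrix_le_two_mul_fval hm n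
    (G.comap fun i => ⟨i, x i⟩)
    (hcf.comap (Embedding.comap ⟨_, fun _ _ h => congrArg Sigma.fst h⟩ G).isContained)
  simp only [Fintype.card_fin] at h hx
  have hsum := Finset.sum_le_sum fun x (_ : x ∈ univ) => hx x
  rw [← h, Finset.sum_const, Finset.card_univ, smul_eq_mul] at hsum
  exact le_of_mul_le_mul_left (Nat.le_of_mul_le_mul_left hsum card_pos) two_pos

theorem stmt4_general (r t : ℕ) (ht : 3 ≤ t) (hr : t ≤ r) (n : Fin r → ℕ)
    (hpos : ∀ i, 0 < n i) :
    IsGreatest {m : ℕ | ∃ G ≤ completeMultipartite n, G.CliqueFree t ∧ G.edgeSet.ncard = m}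
      (fval r t n) := by
  obtain ⟨m, rfl⟩ : ∃ m, t = m + 2 := ⟨t - 2, by omega⟩
  refine ⟨exists_cliqueFree_le_completeMultipartite_ncard_edgeSet_eq_fval (by omega) n hpos, ?_⟩
  rintro _ ⟨G, hG, hcf, rfl⟩
  exact ncard_edgeSet_le_fval (by omega) n hpos G hG hcf

/-- Bollobás–Erdős–Straus: `ex(n₁,…,n_r, K_t) = f(n₁,…,n_r,1,t)`, i.e. the maximum number
of edges of a `K_t`-free spanning subgraph of `K_{n₁,…,n_r}` is `f(n₁,…,n_r,1,t)`. -/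
theorem stmt4 (r t : ℕ) (ht : 3 ≤ t) (hr : t ≤ r) (n : Fin r → ℕ)
    (hpos : ∀ i, 0 < n i) (hmono : Antitone n) :
    IsGreatest {m : ℕ | ∃ G ≤ completeMultipartite n, G.CliqueFree t ∧ G.edgeSet.ncard = m}
      (fval r t n) :=
  stmt4_general r t ht hr n hpos
end

section
/- Let $r \geq t \geq 3$ and let $n_1 \geq \cdots \geq n_r$ with $n_r \geq 1$. Then $f(n_1,\ldots,n_r,1,t) \geq f(n_1,\ldots,n_{b-1},1,t) + \left(\sum_{i=b}^r n_i\right)\left(\sum_{i=1}^{t-2} n_i\right)$ for any $t \leq b \leq r$. -/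
/-!
Take a partition `P` of the first `b - 1` classes into `t - 1` parts attaining
`f(n₁,…,n_{b-1},1,t)`. The classes `1, …, t - 2` meet at most `t - 2` parts, so some part `q`
avoids all of them. Putting every class `b, …, r` into `q` gives a partition of `[r]` whose value
exceeds that of `P` by exactly `(∑_{i ≥ b} nᵢ)` times the weight outside `q`, and that weight is at
least `∑_{i ≤ t-2} nᵢ`.
-/

open Finset

section PairSum

variable {α R : Type*} [Fintype α] [LinearOrder α] [CommSemiring R]

theorem sum_lt_mul_add_single (w : α → R) (q : α) (W : R) :
    ∑ p ∈ univ.filter (fun p : α × α => p.1 < p.2),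
        (w + Pi.single q W : α → R) p.1 * (w + Pi.single q W : α → R) p.2 =
      ∑ p ∈ univ.filter (fun p : α × α => p.1 < p.2), w p.1 * w p.2 +
        W * ∑ p ∈ univ.erase q, w p := by
  set d : α → R := Pi.single q W with hd
  have hterm : ∀ p ∈ univ.filter (fun p : α × α => p.1 < p.2),
      (w + d) p.1 * (w + d) p.2 = w p.1 * w p.2 + (d p.1 * w p.2 + w p.1 * d p.2) := by
    rintro ⟨a, b⟩ hab
    have hne : a ≠ b := (mem_filter.mp hab).2.ne
    have hdd : d a * d b = 0 := by
      by_cases ha : a = q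
      · simp [hd, Pi.single_apply, ha ▸ hne.symm]
      · simp [hd, Pi.single_apply, ha]
    simp only [Pi.add_apply, add_mul, mul_add, hdd, add_zero]
    ring
  have hleft : ∑ p ∈ univ.filter (fun p : α × α => p.1 < p.2), d p.1 * w p.2 =
      W * ∑ p ∈ univ.filter (q < ·), w p := by
    rw [sum_filter, Fintype.sum_prod_type, Fintype.sum_eq_single q fun a ha => by simp [hd, ha],
      sum_filter, mul_sum]
    simp [hd]
  have hright : ∑ p ∈ univ.filter (fun p : α × α => p.1 < p.2), w p.1 * d p.2 =
      W * ∑ p ∈ univ.filter (· < q), w p := by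
    rw [sum_filter, Fintype.sum_prod_type_right,
      Fintype.sum_eq_single q fun a ha => by simp [hd, ha], sum_filter, mul_sum]
    simp [hd, mul_comm]
  have hsplit : ∑ p ∈ univ.filter (q < ·), w p + ∑ p ∈ univ.filter (· < q), w p =
      ∑ p ∈ univ.erase q, w p := by
    rw [← filter_ne', sum_filter, sum_filter, sum_filter, ← sum_add_distrib]
    refine sum_congr rfl fun p _ => ?_
    rcases lt_trichotomy p q with h | rfl | h
    · simp [h, h.not_gt, h.ne]
    · simp
    · simp [h, h.not_gt, h.ne']
  rw [sum_congr rfl hterm, sum_add_distrib, sum_add_distrib, hleft, hright, ← mul_add, hsplit]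

end PairSum

theorem Fin.sum_univ_eq_sum_castLE_add {M : Type*} [AddCommMonoid M] {m r : ℕ} (h : m ≤ r)
    (f : Fin r → M) :
    ∑ i, f i =
      ∑ i : Fin m, f (i.castLE h) + ∑ i ∈ univ.filter (fun i : Fin r => m ≤ i.val), f i := by
  have hlow : univ.filter (fun i : Fin r => i.val < m) = univ.map (Fin.castLEEmb h) := by
    ext i
    simp only [mem_filter, mem_univ, true_and, mem_map, Fin.castLEEmb_apply]
    exact ⟨fun hi => ⟨⟨i, hi⟩, rfl⟩, by rintro ⟨j, rfl⟩; exact j.isLt⟩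
  rw [← sum_filter_add_sum_filter_not univ (fun i : Fin r => i.val < m), hlow, sum_map]
  simp only [Fin.castLEEmb_apply, not_lt]

theorem Fin.sum_filter_val_lt_castLE {M : Type*} [AddCommMonoid M] {m r k : ℕ} (h : m ≤ r)
    (hk : k ≤ m) (f : Fin r → M) :
    ∑ i ∈ univ.filter (fun i : Fin r => i.val < k), f i =
      ∑ i ∈ univ.filter (fun i : Fin m => i.val < k), f (i.castLE h) := by
  have htail :
      ∑ i ∈ univ.filter (fun i : Fin r => m ≤ i.val), (if i.val < k then f i else 0) = 0 :=
    sum_eq_zero fun i hi => if_neg (by have := (mem_filter.mp hi).2; omega)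
  rw [sum_filter, sum_filter, Fin.sum_univ_eq_sum_castLE_add h, htail, add_zero]
  rfl

section Partition

variable {m r s : ℕ}

def fiberWeight (n : Fin r → ℕ) (P : Fin r → Fin s) (p : Fin s) : ℕ :=
  ∑ i ∈ univ.filter (fun i => P i = p), n i

theorem partitionValue_eq_sum_fiberWeight (n : Fin r → ℕ) (P : Fin r → Fin s) :
    partitionValue n P = ∑ p ∈ univ.filter (fun p : Fin s × Fin s => p.1 < p.2),
      fiberWeight n P p.1 * fiberWeight n P p.2 :=
  rfl

theorem sum_erase_fiberWeight (n : Fin r → ℕ) (P : Fin r → Fin s) (q : Fin s) :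
    ∑ p ∈ univ.erase q, fiberWeight n P p = ∑ i ∈ univ.filter (fun i => P i ≠ q), n i := by
  simp only [fiberWeight]
  rw [sum_fiberwise_eq_sum_filter]
  simp

def extendPartition (P : Fin m → Fin s) (q : Fin s) (i : Fin r) : Fin s :=
  if hi : i.val < m then P ⟨i, hi⟩ else q

variable (P : Fin m → Fin s) (q : Fin s)

@[simp]
theorem extendPartition_castLE (h : m ≤ r) (i : Fin m) :
    extendPartition P q (i.castLE h) = P i :=
  dif_pos i.isLt

theorem extendPartition_of_le {i : Fin r} (hi : m ≤ i.val) : extendPartition P q i = q :=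
  dif_neg (by omega)

theorem Function.Surjective.extendPartition (hP : Function.Surjective P) (h : m ≤ r) :
    Function.Surjective (extendPartition P q : Fin r → Fin s) := fun p =>
  let ⟨i, hi⟩ := hP p
  ⟨i.castLE h, by rw [extendPartition_castLE P q h, hi]⟩

theorem fiberWeight_extendPartition (h : m ≤ r) (n : Fin r → ℕ) :
    fiberWeight n (extendPartition P q) = fiberWeight (n ∘ Fin.castLE h) P +
      Pi.single q (∑ i ∈ univ.filter (fun i : Fin r => m ≤ i.val), n i) := by
  ext p
  have htail : ∑ i ∈ univ.filter (fun i : Fin r => m ≤ i.val),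
      (if extendPartition P q i = p then n i else 0) =
        (Pi.single q (∑ i ∈ univ.filter (fun i : Fin r => m ≤ i.val), n i) : Fin s → ℕ) p := by
    rw [sum_congr rfl fun i hi => by rw [extendPartition_of_le P q (mem_filter.mp hi).2]]
    rcases eq_or_ne p q with rfl | hp
    · simp
    · simp [hp, hp.symm]
  rw [Pi.add_apply, fiberWeight, fiberWeight, sum_filter, Fin.sum_univ_eq_sum_castLE_add h, htail]
  simp only [extendPartition_castLE, Function.comp_apply, sum_filter]

theorem partitionValue_extendPartition (h : m ≤ r) (n : Fin r → ℕ) :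
    partitionValue n (extendPartition P q) = partitionValue (n ∘ Fin.castLE h) P +
      (∑ i ∈ univ.filter (fun i : Fin r => m ≤ i.val), n i) *
        ∑ i ∈ univ.filter (fun i => P i ≠ q), n (i.castLE h) := by
  rw [partitionValue_eq_sum_fiberWeight, fiberWeight_extendPartition P q h,
    sum_lt_mul_add_single, sum_erase_fiberWeight]
  rfl

end Partition

section Fval

variable {m r t : ℕ}

theorem partitionValue_le_fval {n : Fin r → ℕ} {P : Fin r → Fin (t - 1)}
    (hP : Function.Surjective P) : partitionValue n P ≤ fval r t n :=
  le_sup (mem_filter.mpr ⟨mem_univ P, hP⟩)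

theorem exists_surjective_partitionValue_eq_fval (ht : 0 < t - 1) (hm : t - 1 ≤ m)
    (n : Fin m → ℕ) :
    ∃ P : Fin m → Fin (t - 1), Function.Surjective P ∧ partitionValue n P = fval m t n := by
  have : Nonempty (Fin (t - 1)) := ⟨⟨0, ht⟩⟩
  have hne : (univ.filter fun P : Fin m → Fin (t - 1) => Function.Surjective P).Nonempty :=
    ⟨_, mem_filter.mpr ⟨mem_univ _, Function.invFun_surjective (Fin.castLE_injective hm)⟩⟩
  obtain ⟨P, hP, hPsup⟩ := exists_mem_eq_sup _ hne (partitionValue n)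
  exact ⟨P, (mem_filter.mp hP).2, hPsup.symm⟩

end Fval

theorem Fin.exists_forall_val_lt_ne {m s k : ℕ} (hk : k < s) (P : Fin m → Fin s) :
    ∃ q : Fin s, ∀ i : Fin m, i.val < k → P i ≠ q := by
  set K := univ.filter fun i : Fin m => i.val < k
  have hcard : #(K.image P) < #(univ : Finset (Fin s)) :=
    calc #(K.image P) ≤ #K := card_image_le
      _ ≤ k := by rw [Fin.card_filter_val_lt]; exact min_le_right _ _
      _ < _ := by simpa using hk
  obtain ⟨q, -, hq⟩ := exists_mem_notMem_of_card_lt_card hcard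
  exact ⟨q, fun i hi hPi => hq (mem_image.mpr ⟨i, mem_filter.mpr ⟨mem_univ i, hi⟩, hPi⟩)⟩

theorem fval_castLE_add_mul_le {m r t k : ℕ} (h : m ≤ r) (hk : k < t - 1) (hm : t - 1 ≤ m)
    (n : Fin r → ℕ) :
    fval m t (n ∘ Fin.castLE h) +
        (∑ i ∈ univ.filter (fun i : Fin r => m ≤ i.val), n i) *
          ∑ i ∈ univ.filter (fun i : Fin r => i.val < k), n i ≤
      fval r t n := by
  obtain ⟨P, hPsurj, hP⟩ :=
    exists_surjective_partitionValue_eq_fval (by omega) hm (n ∘ Fin.castLE h)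
  obtain ⟨q, hq⟩ := Fin.exists_forall_val_lt_ne hk P
  have hhead : ∑ i ∈ univ.filter (fun i : Fin r => i.val < k), n i ≤
      ∑ i ∈ univ.filter (fun i => P i ≠ q), n (i.castLE h) := by
    rw [Fin.sum_filter_val_lt_castLE h (by omega)]
    exact sum_le_sum_of_subset fun i hi => mem_filter.mpr ⟨mem_univ i, hq i (mem_filter.mp hi).2⟩
  calc _ ≤ partitionValue (n ∘ Fin.castLE h) P +
        (∑ i ∈ univ.filter (fun i : Fin r => m ≤ i.val), n i) *
          ∑ i ∈ univ.filter (fun i => P i ≠ q), n (i.castLE h) := by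
        rw [hP]; gcongr
    _ = partitionValue n (extendPartition P q) := (partitionValue_extendPartition P q h n).symm
    _ ≤ fval r t n := partitionValue_le_fval (hPsurj.extendPartition P q h)

-- Class `i : Fin r` is class `i + 1` of the paper.
/-- `f(n₁,…,n_r,1,t) ≥ f(n₁,…,n_{b-1},1,t) + (∑_{i=b}^r n_i)(∑_{i=1}^{t-2} n_i)`
for any `t ≤ b ≤ r`.  (Classes are `1`-indexed in the paper; here index `i : Fin r`
corresponds to class `i+1`.) -/
theorem stmt5 (r t b : ℕ) (ht : 3 ≤ t) (hb1 : t ≤ b) (hb2 : b ≤ r)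
    (n : Fin r → ℕ) :
    fval (b - 1) t (fun i => n ⟨i.val, lt_of_lt_of_le i.isLt (by omega)⟩) +
      (∑ i ∈ Finset.univ.filter (fun i : Fin r => b - 1 ≤ i.val), n i) *
      (∑ i ∈ Finset.univ.filter (fun i : Fin r => i.val < t - 2), n i)
      ≤ fval r t n :=
  fval_castLE_add_mul_le (by omega) (by omega) (by omega) n
end

section
/- Let $r \geq t \geq 3$, let $K = K_{n_1,\ldots,n_r}$ with $n_1 \geq \cdots \geq n_r$, and suppose $\mathcal{P} = (P_1,\ldots,P_{t-1})$ is a partition of $V(K)$ into $t-1$ parts achieving the maximum of $e(K[\mathcal{P}])$, where $K[\mathcal{P}]$ is the spanning subgraph of $K$ retaining only edges between different $P_j$'s. Then $\mathcal{P}$ is 1-partial to $\mathcal{V} = (V_1,\ldots,V_r)$, that is, each part $P_j$ contains vertices from at most one class $V_i$ that is not entirely contained in $P_j$. -/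
/-!
Moving a single vertex `x ∈ V_i` into the part `P_j` changes `e(K[𝒫])` by the difference of
its degrees, and its degree in `P_j` is the number of vertices outside `V_i ∪ P_j`, which does
not depend on where `x` itself sits. In an extremal partition every vertex therefore sits in a
part of maximal degree, so all parts meeting `V_i` have the same count for `V_i`, and moving a
vertex of `V_i` between them keeps the partition extremal. If `V_i` and `V_{i'}` were both
partial in `P_j`, move some `x ∈ V_i ∩ P_j` to another part meeting `V_i`: this raises the
count of `V_{i'}` at `P_j` by one and does not raise it at any other part, so a vertex of
`V_{i'}` outside `P_j` would gain by moving into `P_j`, contradicting extremality.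
-/

open Finset

/-- The subgraph `K[𝒫]` of `K_{n₁,…,n_r}` keeping only edges between different classes
`V_i` and different parts `P_j` of the vertex partition `P`. -/
def multipartitePartGraph {r s : ℕ} (n : Fin r → ℕ)
    (P : (Σ i : Fin r, Fin (n i)) → Fin s) : SimpleGraph (Σ i : Fin r, Fin (n i)) where
  Adj u v := u.1 ≠ v.1 ∧ P u ≠ P v
  symm := ⟨fun _ _ h => ⟨h.1.symm, h.2.symm⟩⟩
  loopless := ⟨fun _ h => h.1 rfl⟩

/-- `e(K[𝒫])`, the number of edges of `K_{n₁,…,n_r}[𝒫]`. -/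
noncomputable def partVal {r s : ℕ} (n : Fin r → ℕ)
    (P : (Σ i : Fin r, Fin (n i)) → Fin s) : ℕ :=
  (multipartitePartGraph n P).edgeSet.ncard

/-- The class `V_i` is partial in the part `P_j`:
`V_i ∩ P_j ≠ ∅` and `V_i ⊄ P_j`. -/
def PartialIn {r s : ℕ} {n : Fin r → ℕ} (P : (Σ i : Fin r, Fin (n i)) → Fin s)
    (i : Fin r) (j : Fin s) : Prop :=
  (∃ v : Σ i : Fin r, Fin (n i), v.1 = i ∧ P v = j) ∧
  (∃ v : Σ i : Fin r, Fin (n i), v.1 = i ∧ P v ≠ j)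

lemma SimpleGraph.ncard_edgeSet_eq_add_degree {V : Type*} [Fintype V] [DecidableEq V]
    (G : SimpleGraph V) [DecidableRel G.Adj] (x : V) :
    G.edgeSet.ncard = (G.deleteIncidenceSet x).edgeSet.ncard + G.degree x := by
  simp only [← SimpleGraph.coe_edgeFinset, Set.ncard_coe_finset,
    SimpleGraph.card_edgeFinset_deleteIncidenceSet]
  exact (Nat.sub_add_cancel (G.degree_le_card_edgeFinset x)).symm

namespace multipartitePartGraph

variable {r s : ℕ} {n : Fin r → ℕ} (P : (Σ i : Fin r, Fin (n i)) → Fin s)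

instance : DecidableRel (multipartitePartGraph n P).Adj :=
  fun u v => inferInstanceAs (Decidable (u.1 ≠ v.1 ∧ P u ≠ P v))

/-- The degree in `K[𝒫]` of a vertex of `V_i` placed in `P_j`. -/
def outsideCount (i : Fin r) (j : Fin s) : ℕ :=
  #{w : Σ i : Fin r, Fin (n i) | w.1 ≠ i ∧ P w ≠ j}

def IsExtremal : Prop :=
  ∀ Q : (Σ i : Fin r, Fin (n i)) → Fin s, partVal n Q ≤ partVal n P

lemma degree_eq_outsideCount (x : Σ i : Fin r, Fin (n i)) :
    (multipartitePartGraph n P).degree x = outsideCount P x.1 (P x) := by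
  rw [← SimpleGraph.card_neighborFinset_eq_degree, outsideCount]
  congr 1
  ext w
  simp only [SimpleGraph.mem_neighborFinset, mem_filter, mem_univ, true_and]
  exact and_congr ne_comm ne_comm

lemma deleteIncidenceSet_update (x : Σ i : Fin r, Fin (n i)) (j : Fin s) :
    (multipartitePartGraph n (Function.update P x j)).deleteIncidenceSet x =
      (multipartitePartGraph n P).deleteIncidenceSet x := by
  ext u v
  simp only [SimpleGraph.deleteIncidenceSet_adj]
  constructor <;> rintro ⟨hadj, hu, hv⟩ <;>
    simp_all [multipartitePartGraph, Function.update_of_ne]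

lemma outsideCount_update_fst (x : Σ i : Fin r, Fin (n i)) (j j' : Fin s) :
    outsideCount (Function.update P x j) x.1 j' = outsideCount P x.1 j' := by
  unfold outsideCount
  congr 1
  ext w
  by_cases hw : w = x
  · simp [hw]
  · simp [Function.update_of_ne hw]

lemma partVal_update_add (x : Σ i : Fin r, Fin (n i)) (j : Fin s) :
    partVal n (Function.update P x j) + outsideCount P x.1 (P x) =
      partVal n P + outsideCount P x.1 j := by
  have hsplit : ∀ Q : (Σ i : Fin r, Fin (n i)) → Fin s, partVal n Q =
      ((multipartitePartGraph n Q).deleteIncidenceSet x).edgeSet.ncard +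
        outsideCount Q x.1 (Q x) := fun Q => by
    rw [partVal, SimpleGraph.ncard_edgeSet_eq_add_degree, degree_eq_outsideCount]
  rw [hsplit (Function.update P x j), hsplit P, deleteIncidenceSet_update,
    Function.update_self, outsideCount_update_fst]
  ring

variable {P}

lemma outsideCount_le_of_isExtremal (hP : IsExtremal P) (x : Σ i : Fin r, Fin (n i))
    (j : Fin s) : outsideCount P x.1 j ≤ outsideCount P x.1 (P x) := by
  have := partVal_update_add P x j
  have := hP (Function.update P x j)
  omega

lemma outsideCount_eq_of_isExtremal (hP : IsExtremal P) {x y : Σ i : Fin r, Fin (n i)}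
    (hxy : x.1 = y.1) : outsideCount P x.1 (P x) = outsideCount P x.1 (P y) :=
  le_antisymm (hxy ▸ outsideCount_le_of_isExtremal hP y (P x))
    (outsideCount_le_of_isExtremal hP x (P y))

lemma isExtremal_update (hP : IsExtremal P) {x y : Σ i : Fin r, Fin (n i)} (hxy : x.1 = y.1) :
    IsExtremal (Function.update P x (P y)) := by
  intro Q
  have := partVal_update_add P x (P y)
  rw [outsideCount_eq_of_isExtremal hP hxy] at this
  have := hP Q
  omega

lemma outsideCount_update_of_eq {x : Σ i : Fin r, Fin (n i)} {i : Fin r} {j j' : Fin s}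
    (hi : x.1 ≠ i) (hx : P x = j) (hj' : j' ≠ j) :
    outsideCount (Function.update P x j') i j = outsideCount P i j + 1 := by
  have hset : filter (fun w => w.1 ≠ i ∧ Function.update P x j' w ≠ j) univ =
      insert x (filter (fun w => w.1 ≠ i ∧ P w ≠ j) univ) := by
    ext w
    by_cases hw : w = x
    · subst hw
      simp [hi, hj']
    · simp [hw]
  rw [outsideCount, hset, card_insert_of_notMem (by simp [hx]), outsideCount]

lemma outsideCount_update_le {x : Σ i : Fin r, Fin (n i)} (i : Fin r) {j : Fin s}
    (j' : Fin s) (hx : P x ≠ j) :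
    outsideCount (Function.update P x j') i j ≤ outsideCount P i j := by
  refine card_le_card fun w hw => ?_
  simp only [mem_filter, mem_univ, true_and] at hw ⊢
  by_cases h : w = x
  · subst h
    exact ⟨hw.1, hx⟩
  · rwa [Function.update_of_ne h] at hw

end multipartitePartGraph

open multipartitePartGraph in
theorem stmt6_general (r t : ℕ) (n : Fin r → ℕ)
    (P : (Σ i : Fin r, Fin (n i)) → Fin (t - 1))
    (hmax : ∀ Q : (Σ i : Fin r, Fin (n i)) → Fin (t - 1), partVal n Q ≤ partVal n P) :
    ∀ j : Fin (t - 1), ∀ i i' : Fin r,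
      PartialIn P i j → PartialIn P i' j → i = i' := by
  rintro j i i' ⟨⟨x, rfl, hxj⟩, ⟨x₁, hx₁, hx₁j⟩⟩ ⟨⟨y, rfl, hyj⟩, ⟨y₂, hy₂, hy₂j⟩⟩
  by_contra hne
  -- Move `x` to the part of `x₁`; in the new extremal partition `y₂` prefers `P_j`.
  have hQ := isExtremal_update hmax hx₁.symm
  have hy₂x : y₂ ≠ x := fun h => hne (by rw [← hy₂, h])
  have hbetter := outsideCount_update_of_eq (i := y.1) hne hxj hx₁j
  have hworse := outsideCount_update_le y.1 (P x₁) (x := x) (hxj ▸ hy₂j.symm)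
  have hy := outsideCount_eq_of_isExtremal hmax (x := y) (y := y₂) hy₂.symm
  have hopt := outsideCount_le_of_isExtremal hQ y₂ j
  rw [Function.update_of_ne hy₂x, hy₂] at hopt
  rw [hyj] at hy
  omega

/-- An extremal `(t-1)`-partition `𝒫` of `V(K_{n₁,…,n_r})` is 1-partial: each part
contains at most one partial class `V_i`. -/
theorem stmt6 (r t : ℕ) (ht : 3 ≤ t) (hr : t ≤ r) (n : Fin r → ℕ)
    (hpos : ∀ i, 0 < n i) (hmono : Antitone n)
    (P : (Σ i : Fin r, Fin (n i)) → Fin (t - 1))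
    (hmax : ∀ Q : (Σ i : Fin r, Fin (n i)) → Fin (t - 1), partVal n Q ≤ partVal n P) :
    ∀ j : Fin (t - 1), ∀ i i' : Fin r,
      PartialIn P i j → PartialIn P i' j → i = i' :=
  stmt6_general r t n P hmax
end

section
/- Let $r \geq t \geq 3$, $K = K_{n_1,\ldots,n_r}$ with classes $V_1,\ldots,V_r$ of sizes $n_1 \geq \cdots \geq n_r$, and let $\mathcal{P} = (P_1,\ldots,P_{t-1})$ be an extremal $(t-1)$-partition (i.e., $e(K[\mathcal{P}])$ is maximum among all $(t-1)$-partitions of $V(K)$). If $V_i \cap P_j \neq \emptyset$ for some $i,j$, then for every $j' \neq j$ we have $|P_j \setminus V_i| \leq |P_{j'} \setminus V_i|$. In particular, if $V_i$ is partial in both $P_j$ and $P_{j'}$, then $|P_j \setminus V_i| = |P_{j'} \setminus V_i|$. -/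
/-! Moving `S = V_i ∩ P_j` into `P_{j'}` only affects edges at `S`, which lies inside the single
class `V_i`: the edges from `S` to `P_{j'} \ V_i` are replaced by edges from `S` to `P_j \ V_i`, so
the edge count changes by `|S| (|P_j \ V_i| - |P_{j'} \ V_i|)`. Maximality of `𝒫` makes this change
nonpositive and `S ≠ ∅`, whence `|P_j \ V_i| ≤ |P_{j'} \ V_i|`; partiality in both parts gives both
inequalities. -/

open Finset

lemma sum_sum_mul_add_mul_swap {V : Type*} [Fintype V] (f g : V → ℕ) :
    ∑ u, ∑ v, (f u * g v + f v * g u) = 2 * (∑ u, f u) * ∑ u, g u := by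
  simp only [sum_add_distrib, ← mul_sum, ← sum_mul]
  ring

section Relocation

variable {V ι κ : Type*} [DecidableEq ι] [DecidableEq κ] (c : V → ι)

/-- The exchange move: `V_i ∩ P_j` is moved into `P_{j'}`. -/
def relocate (P : V → κ) (i : ι) (j j' : κ) : V → κ :=
  fun v => if c v = i ∧ P v = j then j' else P v

lemma crossPair_indicator_relocate (P : V → κ) (i : ι) (j j' : κ) (u v : V) :
    (if c u ≠ c v ∧ relocate c P i j j' u ≠ relocate c P i j j' v then 1 else 0)
      + (if c u = i ∧ P u = j then 1 else 0) * (if P v = j' ∧ c v ≠ i then 1 else 0)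
      + (if c v = i ∧ P v = j then 1 else 0) * (if P u = j' ∧ c u ≠ i then 1 else 0)
    = (if c u ≠ c v ∧ P u ≠ P v then 1 else 0)
      + (if c u = i ∧ P u = j then 1 else 0) * (if P v = j ∧ c v ≠ i then 1 else 0)
      + (if c v = i ∧ P v = j then 1 else 0) * (if P u = j ∧ c u ≠ i then 1 else 0) := by
  unfold relocate
  split_ifs <;> grind

variable [Fintype V]

/-- Ordered pairs of vertices in different classes and different parts: twice `e(K[P])`. -/
def crossPairCount (P : V → κ) : ℕ :=
  ∑ u, #{v | c u ≠ c v ∧ P u ≠ P v}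

variable {c}

theorem crossPairCount_relocate_add (P : V → κ) (i : ι) (j j' : κ) :
    crossPairCount c (relocate c P i j j')
      + 2 * #{v | c v = i ∧ P v = j} * #{v | P v = j' ∧ c v ≠ i}
    = crossPairCount c P + 2 * #{v | c v = i ∧ P v = j} * #{v | P v = j ∧ c v ≠ i} := by
  simp only [crossPairCount, card_filter, ← sum_sum_mul_add_mul_swap, ← sum_add_distrib,
    ← add_assoc]
  exact sum_congr rfl fun u _ => sum_congr rfl fun v _ => crossPair_indicator_relocate c P i j j' u v

theorem card_le_card_of_crossPairCount_maximal {P : V → κ}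
    (hmax : ∀ Q : V → κ, crossPairCount c Q ≤ crossPairCount c P) {i : ι} {j : κ}
    (hS : ∃ v, c v = i ∧ P v = j) (j' : κ) :
    #{v | P v = j ∧ c v ≠ i} ≤ #{v | P v = j' ∧ c v ≠ i} := by
  have hS_pos : 0 < #{v | c v = i ∧ P v = j} := by
    obtain ⟨v, hv⟩ := hS
    exact card_pos.2 ⟨v, mem_filter.2 ⟨mem_univ v, hv⟩⟩
  have hexchange := crossPairCount_relocate_add (c := c) P i j j'
  have hle := hmax (relocate c P i j j')
  exact le_of_mul_le_mul_left (by omega) (by omega : 0 < 2 * #{v | c v = i ∧ P v = j})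

end Relocation

lemma two_mul_partVal {r s : ℕ} (n : Fin r → ℕ) (P : (Σ i : Fin r, Fin (n i)) → Fin s) :
    2 * partVal n P = crossPairCount Sigma.fst P := by
  classical
  rw [partVal, ← SimpleGraph.coe_edgeFinset, Set.ncard_coe_finset,
    ← SimpleGraph.sum_degrees_eq_twice_card_edges]
  refine sum_congr rfl fun u _ => ?_
  rw [SimpleGraph.degree, SimpleGraph.neighborFinset_eq_filter]
  simp only [multipartitePartGraph]
  congr

lemma ncard_setOf_eq_card_filter {α : Type*} [Fintype α] (p : α → Prop) [DecidablePred p] :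
    {v | p v}.ncard = #{v | p v} := by
  rw [Set.ncard_eq_toFinset_card', Set.toFinset_ofPred]

theorem stmt7_general (r t : ℕ) (n : Fin r → ℕ)
    (P : (Σ i : Fin r, Fin (n i)) → Fin (t - 1))
    (hmax : ∀ Q : (Σ i : Fin r, Fin (n i)) → Fin (t - 1), partVal n Q ≤ partVal n P) :
    (∀ (i : Fin r) (j j' : Fin (t - 1)),
      (∃ v : Σ i : Fin r, Fin (n i), v.1 = i ∧ P v = j) → j' ≠ j →
        {v : Σ i : Fin r, Fin (n i) | P v = j ∧ v.1 ≠ i}.ncard ≤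
        {v : Σ i : Fin r, Fin (n i) | P v = j' ∧ v.1 ≠ i}.ncard) ∧
    (∀ (i : Fin r) (j j' : Fin (t - 1)),
      PartialIn P i j → PartialIn P i j' →
        {v : Σ i : Fin r, Fin (n i) | P v = j ∧ v.1 ≠ i}.ncard =
        {v : Σ i : Fin r, Fin (n i) | P v = j' ∧ v.1 ≠ i}.ncard) := by
  have hmax_pairs : ∀ Q, crossPairCount Sigma.fst Q ≤ crossPairCount Sigma.fst P := fun Q => by
    rw [← two_mul_partVal, ← two_mul_partVal]
    exact Nat.mul_le_mul_left 2 (hmax Q)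
  have key : ∀ i j, (∃ v : Σ i : Fin r, Fin (n i), v.1 = i ∧ P v = j) → ∀ j',
      {v : Σ i : Fin r, Fin (n i) | P v = j ∧ v.1 ≠ i}.ncard ≤
        {v : Σ i : Fin r, Fin (n i) | P v = j' ∧ v.1 ≠ i}.ncard := fun i j hS j' => by
    simpa only [ncard_setOf_eq_card_filter] using card_le_card_of_crossPairCount_maximal hmax_pairs hS j'
  exact ⟨fun i j j' hS _ => key i j hS j',
    fun i j j' hj hj' => (key i j hj.1 j').antisymm (key i j' hj'.1 j)⟩

/-- For an extremal `(t-1)`-partition `𝒫`: if `V_i ∩ P_j ≠ ∅` then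
`|P_j \ V_i| ≤ |P_{j'} \ V_i|` for every `j' ≠ j`; in particular, if `V_i` is partial
in both `P_j` and `P_{j'}` then `|P_j \ V_i| = |P_{j'} \ V_i|`. -/
theorem stmt7 (r t : ℕ) (ht : 3 ≤ t) (hr : t ≤ r) (n : Fin r → ℕ)
    (hpos : ∀ i, 0 < n i) (hmono : Antitone n)
    (P : (Σ i : Fin r, Fin (n i)) → Fin (t - 1))
    (hmax : ∀ Q : (Σ i : Fin r, Fin (n i)) → Fin (t - 1), partVal n Q ≤ partVal n P) :
    (∀ (i : Fin r) (j j' : Fin (t - 1)),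
      (∃ v : Σ i : Fin r, Fin (n i), v.1 = i ∧ P v = j) → j' ≠ j →
        {v : Σ i : Fin r, Fin (n i) | P v = j ∧ v.1 ≠ i}.ncard ≤
        {v : Σ i : Fin r, Fin (n i) | P v = j' ∧ v.1 ≠ i}.ncard) ∧
    (∀ (i : Fin r) (j j' : Fin (t - 1)),
      PartialIn P i j → PartialIn P i j' →
        {v : Σ i : Fin r, Fin (n i) | P v = j ∧ v.1 ≠ i}.ncard =
        {v : Σ i : Fin r, Fin (n i) | P v = j' ∧ v.1 ≠ i}.ncard) :=
  stmt7_general r t n P hmax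
end

section
/- Let $r \geq t \geq 3$, $K = K_{n_1,\ldots,n_r}$ with $n_1 \geq \cdots \geq n_r$, and let $\mathcal{P} = (P_1,\ldots,P_{t-1})$ be an extremal $(t-1)$-partition of $V(K)$. If some class $V_i$ is partial in a part $P_j$ (and in some other part $P_{j'}$), then $|V_i| \leq |P_j \setminus V_i|$. -/
open Finset

section LostPairs
variable {α ι κ : Type*} [Fintype α] [DecidableEq ι] [DecidableEq κ] (c : α → ι)

def lostPairs (Q : α → κ) : Finset (α × α) := {p | c p.1 ≠ c p.2 ∧ Q p.1 = Q p.2}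

def partWeight (Q : α → κ) (a : ι) (k : κ) : ℕ := #{u | Q u = k ∧ c u ≠ a}

def isolateClass (Q : α → κ) (a : ι) (j j' : κ) : α → κ :=
  fun u => if c u = a then j else if Q u = j then j' else Q u

theorem card_lostPairs_eq (Q : α → κ) (a : ι) :
    #(lostPairs c Q) = 2 * ∑ u with c u = a, partWeight c Q a (Q u) +
      #{p ∈ lostPairs c Q | c p.1 ≠ a ∧ c p.2 ≠ a} := by
  simp only [lostPairs, partWeight, filter_filter, card_filter, sum_filter, ite_sum_zero,
    Fintype.sum_prod_type]
  rw [two_mul]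
  nth_rw 2 [sum_comm]
  simp only [← sum_add_distrib]
  refine sum_congr rfl fun u _ => sum_congr rfl fun v _ => ?_
  grind

theorem partWeight_apply_le [DecidableEq α] {Q : α → κ}
    (hQ : ∀ Q' : α → κ, #(lostPairs c Q) ≤ #(lostPairs c Q')) (v : α) (l : κ) :
    partWeight c Q (c v) (Q v) ≤ partWeight c Q (c v) l := by
  set Q' := Function.update Q v l
  have hQ' : ∀ u, c u ≠ c v → Q' u = Q u := fun u hu =>
    Function.update_of_ne (by rintro rfl; exact hu rfl) _ _
  have hw : partWeight c Q' (c v) = partWeight c Q (c v) := by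
    ext k
    unfold partWeight
    congr 1
    exact filter_congr fun u _ => by by_cases hu : c u = c v <;> simp [hu, hQ']
  have hoff : {p ∈ lostPairs c Q' | c p.1 ≠ c v ∧ c p.2 ≠ c v} =
      {p ∈ lostPairs c Q | c p.1 ≠ c v ∧ c p.2 ≠ c v} := by
    ext p
    simp only [lostPairs, mem_filter, mem_univ, true_and]
    constructor <;> rintro ⟨⟨hc, hQp⟩, h1, h2⟩ <;> refine ⟨⟨hc, ?_⟩, h1, h2⟩
    · rwa [← hQ' _ h1, ← hQ' _ h2]
    · rwa [hQ' _ h1, hQ' _ h2]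
  have hv : v ∈ ({u | c u = c v} : Finset α) := by simp
  have hsum : ∑ u with c u = c v, partWeight c Q (c v) (Q' u) + partWeight c Q (c v) (Q v) =
      ∑ u with c u = c v, partWeight c Q (c v) (Q u) + partWeight c Q (c v) l := by
    have hQ'v : Q' v = l := Function.update_self ..
    have herase : ∑ u ∈ ({u | c u = c v} : Finset α).erase v, partWeight c Q (c v) (Q' u) =
        ∑ u ∈ ({u | c u = c v} : Finset α).erase v, partWeight c Q (c v) (Q u) :=
      sum_congr rfl fun u hu => congrArg _ (Function.update_of_ne (ne_of_mem_erase hu) l Q)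
    rw [← add_sum_erase _ _ hv, ← add_sum_erase _ _ hv, hQ'v, herase]
    ring
  have h := hQ Q'
  rw [card_lostPairs_eq c Q (c v), card_lostPairs_eq c Q' (c v), hw, hoff] at h
  omega

theorem class_eq_of_apply_eq_of_forall_ne {Q : α → κ}
    (hQ : ∀ Q' : α → κ, #(lostPairs c Q) ≤ #(lostPairs c Q')) {l : κ} (hl : ∀ u, Q u ≠ l)
    {u v : α} (huv : Q u = Q v) : c u = c v := by
  classical
  by_contra h
  have hpos : 0 < partWeight c Q (c u) (Q u) :=
    card_pos.2 ⟨v, by simp [huv, Ne.symm h]⟩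
  have hzero : partWeight c Q (c u) l = 0 := by simp [partWeight, hl]
  have := partWeight_apply_le c hQ u l
  omega

theorem card_lostPairs_merge_le (Q Q' : α → κ) (a : ι) {j j' : κ}
    (h : ∀ u, c u ≠ a → Q' u = if Q u = j then j' else Q u) :
    #{p ∈ lostPairs c Q' | c p.1 ≠ a ∧ c p.2 ≠ a} ≤
      #{p ∈ lostPairs c Q | c p.1 ≠ a ∧ c p.2 ≠ a} +
        2 * (partWeight c Q a j * partWeight c Q a j') := by
  classical
  set W : κ → Finset α := fun k => {u | Q u = k ∧ c u ≠ a}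
  calc #{p ∈ lostPairs c Q' | c p.1 ≠ a ∧ c p.2 ≠ a}
      ≤ #({p ∈ lostPairs c Q | c p.1 ≠ a ∧ c p.2 ≠ a} ∪ (W j ×ˢ W j' ∪ W j' ×ˢ W j)) := by
        refine card_le_card fun p hp => ?_
        simp only [lostPairs, W, mem_filter, mem_univ, true_and, mem_union, mem_product] at hp ⊢
        obtain ⟨⟨hc, hQp⟩, h1, h2⟩ := hp
        rw [h _ h1, h _ h2] at hQp
        split_ifs at hQp <;> grind
    _ ≤ _ := by
        refine (card_union_le _ _).trans ?_
        gcongr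
        refine (card_union_le _ _).trans ?_
        rw [card_product, card_product, mul_comm (#(W j')), ← two_mul]
        rfl

theorem card_lostPairs_isolateClass_add_le (Q : α → κ) (a : ι) {j j' : κ} (hjj' : j ≠ j')
    (hj : ∀ l, partWeight c Q a j ≤ partWeight c Q a l) :
    #(lostPairs c (isolateClass c Q a j j')) + 2 * (#{u | c u = a} * partWeight c Q a j) ≤
      #(lostPairs c Q) + 2 * (partWeight c Q a j * partWeight c Q a j') := by
  set Q' := isolateClass c Q a j j'
  have hzero : partWeight c Q' a j = 0 := by
    simp only [partWeight, card_eq_zero, filter_eq_empty_iff, mem_univ, true_implies, Q',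
      isolateClass]
    grind
  have hsum' : ∑ u with c u = a, partWeight c Q' a (Q' u) = 0 :=
    sum_eq_zero fun u hu => by rw [show Q' u = j from if_pos (mem_filter.1 hu).2, hzero]
  have hsum : #{u | c u = a} * partWeight c Q a j ≤ ∑ u with c u = a, partWeight c Q a (Q u) := by
    simpa using card_nsmul_le_sum _ _ _ fun u _ => hj (Q u)
  have hmerge := card_lostPairs_merge_le c Q Q' a fun u hu => if_neg hu
  rw [card_lostPairs_eq c Q a, card_lostPairs_eq c Q' a, hsum']
  omega

theorem isolateClass_ne_of_partWeight_eq_zero (Q : α → κ) (a : ι) {j j' : κ} (hjj' : j ≠ j')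
    (hj : partWeight c Q a j = 0) (hj' : partWeight c Q a j' = 0) (u : α) :
    isolateClass c Q a j j' u ≠ j' := by
  simp only [partWeight, card_eq_zero, filter_eq_empty_iff, mem_univ, true_implies] at hj hj'
  unfold isolateClass
  grind

end LostPairs

section Multipartite
variable {r s : ℕ} {n : Fin r → ℕ}

theorem card_lostPairs_add_two_mul_partVal (Q : (Σ i : Fin r, Fin (n i)) → Fin s) :
    #(lostPairs Sigma.fst Q) + 2 * partVal n Q =
      #{p : (Σ i : Fin r, Fin (n i)) × (Σ i : Fin r, Fin (n i)) | p.1.1 ≠ p.2.1} := by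
  let : DecidableRel (multipartitePartGraph n Q).Adj := fun u v =>
    inferInstanceAs (Decidable (u.1 ≠ v.1 ∧ Q u ≠ Q v))
  rw [partVal, ← SimpleGraph.coe_edgeFinset, Set.ncard_coe_finset,
    SimpleGraph.two_mul_card_edgeFinset, add_comm,
    ← card_filter_add_card_filter_not
      (s := {p : (Σ i : Fin r, Fin (n i)) × (Σ i : Fin r, Fin (n i)) | p.1.1 ≠ p.2.1})
      (fun p => Q p.1 ≠ Q p.2),
    filter_filter, filter_filter]
  congr 2
  ext p
  simp only [lostPairs, mem_filter, mem_univ, true_and, not_not]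

theorem card_filter_fst_eq (i : Fin r) : #{v : Σ i : Fin r, Fin (n i) | v.1 = i} = n i := by
  rw [card_filter, ← univ_sigma_univ, sum_sigma]
  simp [apply_ite]

theorem card_lostPairs_le_of_partVal_le {P Q : (Σ i : Fin r, Fin (n i)) → Fin s}
    (h : partVal n Q ≤ partVal n P) : #(lostPairs Sigma.fst P) ≤ #(lostPairs Sigma.fst Q) := by
  have hP := card_lostPairs_add_two_mul_partVal P
  have hQ := card_lostPairs_add_two_mul_partVal Q
  omega

theorem surjective_of_forall_card_lostPairs_le (hpos : ∀ i, 0 < n i) (hsr : s ≤ r)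
    {Q : (Σ i : Fin r, Fin (n i)) → Fin s}
    (hQ : ∀ Q' : (Σ i : Fin r, Fin (n i)) → Fin s,
      #(lostPairs Sigma.fst Q) ≤ #(lostPairs Sigma.fst Q')) :
    Function.Surjective Q := by
  intro l
  by_contra! hl
  let f : Fin r → Fin s := fun i => Q ⟨i, ⟨0, hpos i⟩⟩
  have hf : Function.Injective f := fun _ _ h => class_eq_of_apply_eq_of_forall_ne Sigma.fst hQ hl h
  have := Fintype.card_lt_of_injective_not_surjective f hf fun h => hl _ (h l).choose_spec
  simp only [Fintype.card_fin] at this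
  omega

end Multipartite

theorem stmt8_general (r t : ℕ) (hr : t ≤ r) (n : Fin r → ℕ)
    (hpos : ∀ i, 0 < n i)
    (P : (Σ i : Fin r, Fin (n i)) → Fin (t - 1))
    (hmax : ∀ Q : (Σ i : Fin r, Fin (n i)) → Fin (t - 1), partVal n Q ≤ partVal n P)
    (i : Fin r) (j j' : Fin (t - 1)) (hjj' : j ≠ j')
    (hj : PartialIn P i j) (hj' : PartialIn P i j') :
    n i ≤ {v : Σ i : Fin r, Fin (n i) | P v = j ∧ v.1 ≠ i}.ncard := by
  have hmin Q := card_lostPairs_le_of_partVal_le (hmax Q)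
  obtain ⟨⟨v, hvi, hv⟩, -⟩ := hj
  obtain ⟨⟨v', hv'i, hv'⟩, -⟩ := hj'
  have hwj l : partWeight Sigma.fst P i j ≤ partWeight Sigma.fst P i l := by
    simpa only [hvi, hv] using partWeight_apply_le _ hmin v l
  have hwj' : partWeight Sigma.fst P i j' = partWeight Sigma.fst P i j := by
    refine le_antisymm ?_ (hwj j')
    simpa only [hv'i, hv'] using partWeight_apply_le _ hmin v' j
  have key := card_lostPairs_isolateClass_add_le _ P i hjj' hwj
  rw [card_filter_fst_eq, hwj'] at key
  rw [Set.ncard_eq_toFinset_card', Set.toFinset_ofPred]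
  change n i ≤ partWeight Sigma.fst P i j
  rcases Nat.eq_zero_or_pos (partWeight Sigma.fst P i j) with hm | hm
  · set Q := isolateClass Sigma.fst P i j j'
    have hQmin (Q' : (Σ i : Fin r, Fin (n i)) → Fin (t - 1)) :
        #(lostPairs Sigma.fst Q) ≤ #(lostPairs Sigma.fst Q') := by
      have := hmin Q'
      simp only [hm, mul_zero] at key
      omega
    obtain ⟨u, hu⟩ := surjective_of_forall_card_lostPairs_le hpos (by omega) hQmin j'
    exact absurd hu (isolateClass_ne_of_partWeight_eq_zero _ P i hjj' hm (hwj'.trans hm) u)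
  · have := hmin (isolateClass Sigma.fst P i j j')
    exact Nat.le_of_mul_le_mul_right (by omega) hm

/-- For an extremal `(t-1)`-partition `𝒫`: if `V_i` is partial in `P_j` (and in another
part `P_{j'}`), then `|V_i| ≤ |P_j \ V_i|`. -/
theorem stmt8 (r t : ℕ) (ht : 3 ≤ t) (hr : t ≤ r) (n : Fin r → ℕ)
    (hpos : ∀ i, 0 < n i) (hmono : Antitone n)
    (P : (Σ i : Fin r, Fin (n i)) → Fin (t - 1))
    (hmax : ∀ Q : (Σ i : Fin r, Fin (n i)) → Fin (t - 1), partVal n Q ≤ partVal n P)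
    (i : Fin r) (j j' : Fin (t - 1)) (hjj' : j ≠ j')
    (hj : PartialIn P i j) (hj' : PartialIn P i j') :
    n i ≤ {v : Σ i : Fin r, Fin (n i) | P v = j ∧ v.1 ≠ i}.ncard :=
  stmt8_general r t hr n hpos P hmax i j j' hjj' hj hj'
end

section
/- Suppose the partition $\mathcal{P}=(P_1,\ldots,P_{t-1})$ is $\epsilon$-stable to $\mathcal{V}=(V_1,\ldots,V_r)$ and every nonempty intersection $P_j \cap V_i$ has size at least $10tr\epsilon$. Then one can remove a set $X$ of at most $4tr\epsilon$ vertices so that the restricted partition $\mathcal{P}_X = (P_1\setminus X,\ldots,P_{t-1}\setminus X)$ is (exactly) stable to $\mathcal{V}_X = (V_1\setminus X,\ldots,V_r\setminus X)$. -/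
/-!
Rounding `ε` down to `k = ⌊ε⌋₊` turns every condition of `ε`-stability into an inequality
between natural numbers with slack `k`. Let `G` be the least size of an integral part. Inside
each part we delete at most `4k` vertices: part of the integral part, to bring it down to size
exactly `G` whenever this costs at most `2k` (as it does in every part with a partial class);
`3k` vertices of the partial class, if any; and, when the integral part exceeds `G + 2k`, `k`
vertices outside each class, taken from two classes. Every nonempty piece `V_i ∩ P_j` is larger
than the whole deleted set, so no piece vanishes: partial classes and integral parts are the same
before and after the deletion, and the deleted vertices absorb the slack of every inequality.
-/

/-- The class `A` is partial in the part `Pj`: it meets `Pj` but is not contained in it. -/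
def PartIn {V : Type*} (A Pj : Set V) : Prop :=
  (A ∩ Pj).Nonempty ∧ ¬ A ⊆ Pj

/-- The integral part of `Pj`: the union of those classes `Vf i` contained in `Pj`. -/
def intPart {V : Type*} {r : ℕ} (Vf : Fin r → Set V) (Pj : Set V) : Set V :=
  {v | ∃ i, v ∈ Vf i ∧ Vf i ⊆ Pj}

/-- The partition `Pf` is (exactly) stable to `Vf`. -/
def StableTo {V : Type*} {r s : ℕ} (Vf : Fin r → Set V) (Pf : Fin s → Set V) : Prop :=
  (∀ j, ∀ i i', PartIn (Vf i) (Pf j) → PartIn (Vf i') (Pf j) → i = i') ∧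
  (∀ j j', (∃ i, PartIn (Vf i) (Pf j)) → (∃ i, PartIn (Vf i) (Pf j')) →
    (intPart Vf (Pf j)).ncard = (intPart Vf (Pf j')).ncard) ∧
  (∀ j j', (∃ i, PartIn (Vf i) (Pf j)) → (¬ ∃ i, PartIn (Vf i) (Pf j')) →
    (intPart Vf (Pf j)).ncard ≤ (Pf j').ncard) ∧
  (∀ j i, (∃ j', PartIn (Vf i) (Pf j')) → (Vf i).ncard ≤ (intPart Vf (Pf j)).ncard) ∧
  (∀ j j' i, j ≠ j' → Vf i ⊆ Pf j →
    (Pf j \ Vf i).ncard ≤ (intPart Vf (Pf j')).ncard)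

/-- The partition `Pf` is `ε`-stable to `Vf`: each defining condition of stability holds
up to an additive error of `ε`. -/
def EpsStableTo {V : Type*} {r s : ℕ} (Vf : Fin r → Set V) (Pf : Fin s → Set V)
    (ε : ℝ) : Prop :=
  (∀ j, ∀ i i', PartIn (Vf i) (Pf j) → PartIn (Vf i') (Pf j) → i = i') ∧
  (∀ j j', (∃ i, PartIn (Vf i) (Pf j)) → (∃ i, PartIn (Vf i) (Pf j')) →
    ((intPart Vf (Pf j)).ncard : ℝ) ≤ ((intPart Vf (Pf j')).ncard : ℝ) + ε) ∧
  (∀ j j', (∃ i, PartIn (Vf i) (Pf j)) → (¬ ∃ i, PartIn (Vf i) (Pf j')) →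
    ((intPart Vf (Pf j)).ncard : ℝ) ≤ ((Pf j').ncard : ℝ) + ε) ∧
  (∀ j i, (∃ j', PartIn (Vf i) (Pf j')) →
    ((Vf i).ncard : ℝ) ≤ ((intPart Vf (Pf j)).ncard : ℝ) + ε) ∧
  (∀ j j' i, j ≠ j' → Vf i ⊆ Pf j →
    ((Pf j \ Vf i).ncard : ℝ) ≤ ((intPart Vf (Pf j')).ncard : ℝ) + ε)

section StableTrim

open Set Function

variable {V : Type*} {r s : ℕ} {Vf : Fin r → Set V} {Pf : Fin s → Set V}

lemma Nat.le_add_floor_of_le_add {a b : ℕ} {ε : ℝ} (h : (a : ℝ) ≤ b + ε) : a ≤ b + ⌊ε⌋₊ := by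
  rcases le_total a b with hab | hab
  · omega
  · have hε : ((a - b : ℕ) : ℝ) ≤ ε := by
      rw [Nat.cast_sub hab]
      linarith
    have := Nat.le_floor hε
    omega

/-- `EpsStableTo` with a natural-number error `k`. -/
structure StableToWithin (Vf : Fin r → Set V) (Pf : Fin s → Set V) (k : ℕ) : Prop where
  partIn_unique : ∀ j i i', PartIn (Vf i) (Pf j) → PartIn (Vf i') (Pf j) → i = i'
  intPart_le_intPart : ∀ j j', (∃ i, PartIn (Vf i) (Pf j)) → (∃ i, PartIn (Vf i) (Pf j')) →
    (intPart Vf (Pf j)).ncard ≤ (intPart Vf (Pf j')).ncard + k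
  intPart_le_part : ∀ j j', (∃ i, PartIn (Vf i) (Pf j)) → (¬ ∃ i, PartIn (Vf i) (Pf j')) →
    (intPart Vf (Pf j)).ncard ≤ (Pf j').ncard + k
  class_le_intPart : ∀ j i, (∃ j', PartIn (Vf i) (Pf j')) →
    (Vf i).ncard ≤ (intPart Vf (Pf j)).ncard + k
  diff_le_intPart : ∀ j j' i, j ≠ j' → Vf i ⊆ Pf j →
    (Pf j \ Vf i).ncard ≤ (intPart Vf (Pf j')).ncard + k

lemma EpsStableTo.stableToWithin_floor {ε : ℝ} (h : EpsStableTo Vf Pf ε) :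
    StableToWithin Vf Pf ⌊ε⌋₊ := by
  obtain ⟨h₁, h₂, h₃, h₄, h₅⟩ := h
  exact ⟨h₁, fun j j' hj hj' => Nat.le_add_floor_of_le_add (h₂ j j' hj hj'),
    fun j j' hj hj' => Nat.le_add_floor_of_le_add (h₃ j j' hj hj'),
    fun j i hi => Nat.le_add_floor_of_le_add (h₄ j i hi),
    fun j j' i hne hsub => Nat.le_add_floor_of_le_add (h₅ j j' i hne hsub)⟩

lemma pairwise_disjoint_of_existsUnique {ι : Type*} {W : ι → Set V} (h : ∀ x, ∃! i, x ∈ W i) :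
    Pairwise (Disjoint on W) :=
  fun _ _ hne => disjoint_left.2 fun x hx hx' => hne ((h x).unique hx hx')

lemma inter_subset_diff_of_ne (hVd : Pairwise (Disjoint on Vf)) {i i' : Fin r} (hne : i ≠ i')
    (P : Set V) : Vf i ∩ P ⊆ P \ Vf i' :=
  fun _ hx => ⟨hx.2, disjoint_left.1 (hVd hne) hx.1⟩

lemma intPart_subset (Vf : Fin r → Set V) (P : Set V) : intPart Vf P ⊆ P :=
  fun _ ⟨_, hv, hsub⟩ => hsub hv

lemma disjoint_intPart_of_partIn (hVd : Pairwise (Disjoint on Vf)) {i : Fin r} {P : Set V}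
    (h : PartIn (Vf i) P) : Disjoint (Vf i) (intPart Vf P) := by
  refine disjoint_left.2 fun x hx ⟨i', hx', hsub⟩ => ?_
  rcases eq_or_ne i i' with rfl | hne
  · exact h.2 hsub
  · exact disjoint_left.1 (hVd hne) hx hx'

lemma intPart_eq_self (hV : ∀ x, ∃! i, x ∈ Vf i) {P : Set V} (h : ¬ ∃ i, PartIn (Vf i) P) :
    intPart Vf P = P := by
  refine (intPart_subset Vf P).antisymm fun x hx => ?_
  obtain ⟨i, hi, -⟩ := hV x
  exact ⟨i, hi, by_contra fun hns => h ⟨i, ⟨x, hi, hx⟩, hns⟩⟩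

lemma StableToWithin.intPart_le_of_partIn {k : ℕ} (hS : StableToWithin Vf Pf k)
    (hV : ∀ x, ∃! i, x ∈ Vf i) {j : Fin s} (hj : ∃ i, PartIn (Vf i) (Pf j)) (j' : Fin s) :
    (intPart Vf (Pf j)).ncard ≤ (intPart Vf (Pf j')).ncard + k := by
  by_cases hj' : ∃ i, PartIn (Vf i) (Pf j')
  · exact hS.intPart_le_intPart j j' hj hj'
  · rw [intPart_eq_self hV hj']
    exact hS.intPart_le_part j j' hj hj'

lemma exists_subset_ncard_sdiff_eq [Finite V] {S : Set V} {G : ℕ} (hG : G ≤ S.ncard) :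
    ∃ A ⊆ S, A.ncard = S.ncard - G ∧ (S \ A).ncard = G := by
  obtain ⟨A, hA, hAcard⟩ := exists_subset_card_eq (Nat.sub_le S.ncard G)
  exact ⟨A, hA, hAcard, by rw [ncard_sdiff hA, hAcard]; omega⟩

/-- Two samples of size `k`, from the classes of two points of `P` in different classes, meet
`P \ Vf i` in `k` points unless `P ⊆ Vf i`. -/
lemma exists_subset_hitting_diff [Finite V] (hV : ∀ x, ∃! i, x ∈ Vf i) (P : Set V) {k : ℕ}
    (hk : ∀ i, (Vf i ∩ P).Nonempty → k ≤ (Vf i ∩ P).ncard) :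
    ∃ Y ⊆ P, Y.ncard ≤ 2 * k ∧ ∀ i, ¬ P ⊆ Vf i → k ≤ ((P \ Vf i) ∩ Y).ncard := by
  have hits : ∀ {b : Fin r} {B Y : Set V}, B ⊆ Vf b ∩ P → B.ncard = k → B ⊆ Y →
      ∀ i, i ≠ b → k ≤ ((P \ Vf i) ∩ Y).ncard := fun hB hBk hBY i hi =>
    hBk ▸ ncard_le_ncard (subset_inter (hB.trans (inter_subset_diff_of_ne
      (pairwise_disjoint_of_existsUnique hV) hi.symm P)) hBY)
  rcases P.eq_empty_or_nonempty with rfl | ⟨x, hx⟩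
  · exact ⟨∅, subset_rfl, by simp, fun i h => (h (empty_subset _)).elim⟩
  obtain ⟨a, ha, -⟩ := hV x
  obtain ⟨A, hA, hAk⟩ := exists_subset_card_eq (hk a ⟨x, ha, hx⟩)
  by_cases hPa : P ⊆ Vf a
  · refine ⟨A, hA.trans inter_subset_right, by omega, fun i hi => hits hA hAk subset_rfl i ?_⟩
    rintro rfl
    exact hi hPa
  obtain ⟨y, hy, hya⟩ := not_subset.1 hPa
  obtain ⟨b, hb, -⟩ := hV y
  obtain ⟨B, hB, hBk⟩ := exists_subset_card_eq (hk b ⟨y, hb, hy⟩)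
  refine ⟨A ∪ B, union_subset (hA.trans inter_subset_right) (hB.trans inter_subset_right),
    (ncard_union_le A B).trans (by omega), fun i _ => ?_⟩
  rcases eq_or_ne i a with rfl | hia
  · exact hits hB hBk subset_union_right i fun h => hya (h ▸ hb)
  · exact hits hA hAk subset_union_left i hia

/-- The trace `Y` on the part `P` of a deletion set, relative to the target size `G` of integral
parts of partial parts and the slack `k`. -/
structure IsTrim (Vf : Fin r → Set V) (P : Set V) (k G : ℕ) (Y : Set V) : Prop where
  intPart_le : (intPart Vf P).ncard ≤ (intPart Vf P \ Y).ncard + 2 * k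
  intPart_eq : (intPart Vf P).ncard ≤ G + 2 * k → (intPart Vf P \ Y).ncard = G
  partIn : ∀ i, PartIn (Vf i) P → 3 * k ≤ (Vf i ∩ P ∩ Y).ncard
  hits : G + 2 * k < (intPart Vf P).ncard → ∀ i, ¬ P ⊆ Vf i → k ≤ ((P \ Vf i) ∩ Y).ncard

section IsTrim

variable {P Y Z : Set V} {k G : ℕ}

lemma IsTrim.le_intPart_diff (h : IsTrim Vf P k G Y) : G ≤ (intPart Vf P \ Y).ncard := by
  by_cases hlow : (intPart Vf P).ncard ≤ G + 2 * k
  · exact (h.intPart_eq hlow).ge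
  · have := h.intPart_le
    omega

lemma IsTrim.mono [Finite V] (h : IsTrim Vf P k G Y) (hYZ : Y ⊆ Z) (hZ : Z ∩ P ⊆ Y) :
    IsTrim Vf P k G Z := by
  have hI : intPart Vf P \ Z = intPart Vf P \ Y :=
    (sdiff_subset_sdiff_right hYZ).antisymm fun x ⟨hxI, hxY⟩ =>
      ⟨hxI, fun hxZ => hxY (hZ ⟨hxZ, intPart_subset Vf P hxI⟩)⟩
  refine ⟨hI ▸ h.intPart_le, hI ▸ h.intPart_eq, fun i hi => ?_, fun hhigh i hi => ?_⟩
  · exact (h.partIn i hi).trans (ncard_le_ncard (inter_subset_inter_right _ hYZ))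
  · exact (h.hits hhigh i hi).trans (ncard_le_ncard (inter_subset_inter_right _ hYZ))

lemma exists_isTrim_of_partIn [Finite V] (hVd : Pairwise (Disjoint on Vf)) {ip : Fin r}
    (hip : PartIn (Vf ip) P) (huniq : ∀ i, PartIn (Vf i) P → i = ip)
    (hG : G ≤ (intPart Vf P).ncard) (hI : (intPart Vf P).ncard ≤ G + k)
    (hbig : 3 * k ≤ (Vf ip ∩ P).ncard) :
    ∃ Y ⊆ P, Y.ncard ≤ 4 * k ∧ IsTrim Vf P k G Y := by
  obtain ⟨A, hA, hAcard, hIA⟩ := exists_subset_ncard_sdiff_eq hG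
  obtain ⟨B, hB, hBcard⟩ := exists_subset_card_eq hbig
  have hIY : intPart Vf P \ (A ∪ B) = intPart Vf P \ A := by
    rw [← sdiff_sdiff]
    exact sdiff_eq_left.2 ((disjoint_intPart_of_partIn hVd hip).symm.mono sdiff_subset
      (hB.trans inter_subset_left))
  refine ⟨A ∪ B, union_subset (hA.trans (intPart_subset Vf P)) (hB.trans inter_subset_right),
    (ncard_union_le A B).trans (by omega), by rw [hIY]; omega, fun _ => hIY ▸ hIA, fun i hi => ?_,
    fun _ => by omega⟩
  rw [huniq i hi]
  exact hBcard ▸ ncard_le_ncard (subset_inter hB subset_union_right)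

lemma exists_isTrim_of_low [Finite V] (hnp : ¬ ∃ i, PartIn (Vf i) P)
    (hG : G ≤ (intPart Vf P).ncard) (hlow : (intPart Vf P).ncard ≤ G + 2 * k) :
    ∃ Y ⊆ P, Y.ncard ≤ 4 * k ∧ IsTrim Vf P k G Y := by
  obtain ⟨A, hA, hAcard, hIA⟩ := exists_subset_ncard_sdiff_eq hG
  exact ⟨A, hA.trans (intPart_subset Vf P), by omega, by omega, fun _ => hIA,
    fun i hi => (hnp ⟨i, hi⟩).elim, fun _ => by omega⟩

lemma exists_isTrim_of_high [Finite V] (hV : ∀ x, ∃! i, x ∈ Vf i)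
    (hnp : ¬ ∃ i, PartIn (Vf i) P) (hhigh : G + 2 * k < (intPart Vf P).ncard)
    (hbig : ∀ i, (Vf i ∩ P).Nonempty → k ≤ (Vf i ∩ P).ncard) :
    ∃ Y ⊆ P, Y.ncard ≤ 4 * k ∧ IsTrim Vf P k G Y := by
  obtain ⟨Y, hYP, hYk, hits⟩ := exists_subset_hitting_diff hV P hbig
  exact ⟨Y, hYP, by omega, (ncard_le_ncard_sdiff_add_ncard _ Y).trans (by omega),
    fun _ => by omega, fun i hi => (hnp ⟨i, hi⟩).elim, fun _ => hits⟩

lemma exists_isTrim [Finite V] (hV : ∀ x, ∃! i, x ∈ Vf i)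
    (huniq : ∀ i i', PartIn (Vf i) P → PartIn (Vf i') P → i = i')
    (hG : G ≤ (intPart Vf P).ncard)
    (hpartial : (∃ i, PartIn (Vf i) P) → (intPart Vf P).ncard ≤ G + k)
    (hbig : ∀ i, (Vf i ∩ P).Nonempty → 3 * k ≤ (Vf i ∩ P).ncard) :
    ∃ Y ⊆ P, Y.ncard ≤ 4 * k ∧ IsTrim Vf P k G Y := by
  by_cases hp : ∃ i, PartIn (Vf i) P
  · obtain ⟨ip, hip⟩ := hp
    exact exists_isTrim_of_partIn (pairwise_disjoint_of_existsUnique hV) hip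
      (fun i hi => huniq i ip hi hip) hG (hpartial ⟨ip, hip⟩) (hbig ip hip.1)
  rcases le_or_gt (intPart Vf P).ncard (G + 2 * k) with hlow | hhigh
  · exact exists_isTrim_of_low hp hG hlow
  · exact exists_isTrim_of_high hV hp hhigh fun i hi => (hbig i hi).trans' (by omega)

end IsTrim

lemma iUnion_inter_subset_of_subset (hPd : Pairwise (Disjoint on Pf)) {Y : Fin s → Set V}
    (hY : ∀ j, Y j ⊆ Pf j) (j : Fin s) : (⋃ j', Y j') ∩ Pf j ⊆ Y j := by
  rintro x ⟨hx, hxj⟩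
  obtain ⟨j', hxj'⟩ := mem_iUnion.1 hx
  rcases eq_or_ne j' j with rfl | hne
  · exact hxj'
  · exact (disjoint_left.1 (hPd hne) (hY j' hxj') hxj).elim

section Deletion

variable {X : Set V}

lemma subset_of_diff_subset_diff (hP : ∀ x, ∃! j, x ∈ Pf j)
    (hsurv : ∀ i j, (Vf i ∩ Pf j).Nonempty → ((Vf i ∩ Pf j) \ X).Nonempty) {i : Fin r}
    {j : Fin s} (h : Vf i \ X ⊆ Pf j \ X) : Vf i ⊆ Pf j := by
  intro x hx
  obtain ⟨j', hj', -⟩ := hP x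
  obtain ⟨y, ⟨hyi, hyj'⟩, hyX⟩ := hsurv i j' ⟨x, hx, hj'⟩
  rwa [(hP y).unique hyj' (h ⟨hyi, hyX⟩).1] at hj'

lemma partIn_diff_iff (hP : ∀ x, ∃! j, x ∈ Pf j)
    (hsurv : ∀ i j, (Vf i ∩ Pf j).Nonempty → ((Vf i ∩ Pf j) \ X).Nonempty) (i : Fin r)
    (j : Fin s) : PartIn (Vf i \ X) (Pf j \ X) ↔ PartIn (Vf i) (Pf j) := by
  refine ⟨fun ⟨⟨y, hy, hyj⟩, hns⟩ =>
    ⟨⟨y, hy.1, hyj.1⟩, fun hsub => hns (sdiff_subset_sdiff_left hsub)⟩, fun ⟨hne, hns⟩ => ?_⟩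
  obtain ⟨y, ⟨hyi, hyj⟩, hyX⟩ := hsurv i j hne
  exact ⟨⟨y, ⟨hyi, hyX⟩, hyj, hyX⟩, fun hsub => hns (subset_of_diff_subset_diff hP hsurv hsub)⟩

lemma intPart_diff (hP : ∀ x, ∃! j, x ∈ Pf j)
    (hsurv : ∀ i j, (Vf i ∩ Pf j).Nonempty → ((Vf i ∩ Pf j) \ X).Nonempty) (j : Fin s) :
    intPart (fun i => Vf i \ X) (Pf j \ X) = intPart Vf (Pf j) \ X := by
  ext v
  constructor
  · rintro ⟨i, hv, hsub⟩
    exact ⟨⟨i, hv.1, subset_of_diff_subset_diff hP hsurv hsub⟩, hv.2⟩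
  · rintro ⟨⟨i, hvi, hsub⟩, hvX⟩
    exact ⟨i, ⟨hvi, hvX⟩, sdiff_subset_sdiff_left hsub⟩

variable [Finite V] {k G : ℕ}

lemma ncard_diff_le_intPart_diff_of_partIn (hS : StableToWithin Vf Pf k)
    (hX : ∀ j, IsTrim Vf (Pf j) k G X) {i : Fin r} (hi : ∃ j', PartIn (Vf i) (Pf j'))
    (j : Fin s) : (Vf i \ X).ncard ≤ (intPart Vf (Pf j) \ X).ncard := by
  obtain ⟨j', hj'⟩ := hi
  have hdel : 3 * k ≤ (Vf i ∩ X).ncard := ((hX j').partIn i hj').trans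
    (ncard_le_ncard (inter_subset_inter_left X inter_subset_left))
  have hsplit := ncard_inter_add_ncard_sdiff_eq_ncard (Vf i) X
  have hVi := hS.class_le_intPart j i ⟨j', hj'⟩
  have hIj := (hX j).intPart_le
  omega

lemma ncard_diff_diff_le_intPart_diff (hV : ∀ x, ∃! i, x ∈ Vf i) (hS : StableToWithin Vf Pf k)
    (hX : ∀ j, IsTrim Vf (Pf j) k G X) {j₀ : Fin s} (hj₀ : (intPart Vf (Pf j₀)).ncard ≤ G)
    {i : Fin r} {j j' : Fin s} (hjj' : j ≠ j') (hsub : Vf i ⊆ Pf j) :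
    ((Pf j \ Vf i) \ X).ncard ≤ (intPart Vf (Pf j') \ X).ncard := by
  have hsplit := ncard_inter_add_ncard_sdiff_eq_ncard (Pf j \ Vf i) X
  have hG := (hX j').le_intPart_diff
  by_cases hp : ∃ ip, PartIn (Vf ip) (Pf j)
  · obtain ⟨ip, hip⟩ := hp
    have hne : ip ≠ i := fun h => hip.2 (h ▸ hsub)
    have hdel : 3 * k ≤ ((Pf j \ Vf i) ∩ X).ncard := ((hX j).partIn ip hip).trans
      (ncard_le_ncard (inter_subset_inter_left X (inter_subset_diff_of_ne
        (pairwise_disjoint_of_existsUnique hV) hne _)))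
    have hPj := hS.diff_le_intPart j j' i hjj' hsub
    have hIj' := (hX j').intPart_le
    omega
  by_cases hlow : (intPart Vf (Pf j)).ncard ≤ G + 2 * k
  · have hPj := (hX j).intPart_eq hlow
    rw [intPart_eq_self hV hp] at hPj
    exact (ncard_le_ncard (sdiff_subset_sdiff_left sdiff_subset)).trans (hPj.trans_le hG)
  · have hjj₀ : j ≠ j₀ := by
      rintro rfl
      omega
    have hPj := hS.diff_le_intPart j j₀ i hjj₀ hsub
    by_cases hPi : Pf j ⊆ Vf i
    · simp [sdiff_eq_empty.2 hPi]
    · have hdel := (hX j).hits (by omega) i hPi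
      omega

theorem stableTo_diff (hV : ∀ x, ∃! i, x ∈ Vf i) (hP : ∀ x, ∃! j, x ∈ Pf j)
    (hS : StableToWithin Vf Pf k) (hX : ∀ j, IsTrim Vf (Pf j) k G X) {j₀ : Fin s}
    (hj₀ : (intPart Vf (Pf j₀)).ncard ≤ G)
    (hsurv : ∀ i j, (Vf i ∩ Pf j).Nonempty → ((Vf i ∩ Pf j) \ X).Nonempty) :
    StableTo (fun i => Vf i \ X) (fun j => Pf j \ X) := by
  have hpartial : ∀ j, (∃ i, PartIn (Vf i) (Pf j)) → (intPart Vf (Pf j) \ X).ncard = G :=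
    fun j hj => (hX j).intPart_eq (by have := hS.intPart_le_of_partIn hV hj j₀; omega)
  simp only [StableTo, partIn_diff_iff hP hsurv, intPart_diff hP hsurv]
  refine ⟨hS.partIn_unique, fun j j' hj hj' => (hpartial j hj).trans (hpartial j' hj').symm,
    fun j j' hj _ => ?_, fun j i hi => ncard_diff_le_intPart_diff_of_partIn hS hX hi j,
    fun j j' i hjj' hsub => ?_⟩
  · rw [hpartial j hj]
    exact (hX j').le_intPart_diff.trans
      (ncard_le_ncard (sdiff_subset_sdiff_left (intPart_subset Vf _)))
  · refine le_trans (ncard_le_ncard (t := (Pf j \ Vf i) \ X) ?_)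
      (ncard_diff_diff_le_intPart_diff hV hS hX hj₀ hjj' (subset_of_diff_subset_diff hP hsurv hsub))
    exact fun x ⟨⟨hxP, hxX⟩, hxV⟩ => ⟨⟨hxP, fun h => hxV ⟨h, hxX⟩⟩, hxX⟩

end Deletion

theorem exists_stableTo_diff [Finite V] {k : ℕ} (hV : ∀ x, ∃! i, x ∈ Vf i)
    (hP : ∀ x, ∃! j, x ∈ Pf j) (hS : StableToWithin Vf Pf k)
    (hbig : ∀ i j, (Vf i ∩ Pf j).Nonempty → 4 * s * k < (Vf i ∩ Pf j).ncard) :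
    ∃ X : Set V, X.ncard ≤ 4 * s * k ∧ StableTo (fun i => Vf i \ X) (fun j => Pf j \ X) := by
  rcases isEmpty_or_nonempty (Fin s) with hs | hs
  · exact ⟨∅, by simp, by simp [StableTo]⟩
  obtain ⟨j₀, -, hj₀⟩ := Finset.exists_min_image Finset.univ
    (fun j => (intPart Vf (Pf j)).ncard) Finset.univ_nonempty
  have h4k : 4 * k ≤ 4 * s * k :=
    Nat.mul_le_mul_right k (by have := Fin.pos_iff_nonempty.2 hs; omega)
  choose Y hYP hYcard hY using fun j => exists_isTrim hV (hS.partIn_unique j)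
    (hj₀ j (Finset.mem_univ _)) (fun hj => hS.intPart_le_of_partIn hV hj j₀)
    (fun i hi => by have := hbig i j hi; omega)
  have hXcard : (⋃ j, Y j).ncard ≤ 4 * s * k := by
    calc (⋃ j, Y j).ncard = (⋃ j ∈ Finset.univ, Y j).ncard := by simp
      _ ≤ ∑ j, (Y j).ncard := Finset.set_ncard_biUnion_le _ _
      _ ≤ ∑ _j : Fin s, 4 * k := Finset.sum_le_sum fun j _ => hYcard j
      _ = 4 * s * k := by simp [mul_comm, mul_left_comm]
  refine ⟨⋃ j, Y j, hXcard, stableTo_diff hV hP hS (fun j => (hY j).mono (subset_iUnion Y j)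
    (iUnion_inter_subset_of_subset (pairwise_disjoint_of_existsUnique hP) hYP j)) le_rfl
    fun i j h => sdiff_nonempty_of_ncard_lt_ncard (hXcard.trans_lt (hbig i j h))⟩

end StableTrim

theorem stmt19_general {V : Type*} [Fintype V] (r t : ℕ) (hr : t ≤ r)
    (Vf : Fin r → Set V) (Pf : Fin (t - 1) → Set V)
    (hVpart : ∀ x : V, ∃! i, x ∈ Vf i) (hPpart : ∀ x : V, ∃! j, x ∈ Pf j)
    (ε : ℝ) (hε : 0 < ε)
    (hstab : EpsStableTo Vf Pf ε)
    (hbig : ∀ i j, (Vf i ∩ Pf j).Nonempty → 10 * t * r * ε ≤ ((Vf i ∩ Pf j).ncard : ℝ)) :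
    ∃ X : Set V, (X.ncard : ℝ) ≤ 4 * t * r * ε ∧
      StableTo (fun i => Vf i \ X) (fun j => Pf j \ X) := by
  set k := ⌊ε⌋₊
  have hk : (k : ℝ) ≤ ε := Nat.floor_le hε.le
  have htr : t - 1 ≤ t * r := by
    rcases Nat.eq_zero_or_pos t with rfl | ht
    · simp
    · exact (Nat.sub_le t 1).trans (Nat.le_mul_of_pos_right t (by omega))
  have hbudget : ((4 * (t - 1) * k : ℕ) : ℝ) ≤ 4 * t * r * ε := by
    have htr' : ((t - 1 : ℕ) : ℝ) ≤ t * r := by exact_mod_cast htr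
    push_cast
    nlinarith [mul_le_mul htr' hk (Nat.cast_nonneg k) (by positivity)]
  have hpieces : ∀ i j, (Vf i ∩ Pf j).Nonempty → 4 * (t - 1) * k < (Vf i ∩ Pf j).ncard := by
    intro i j h
    rcases Nat.eq_zero_or_pos (4 * (t - 1) * k) with h0 | hpos
    · exact h0 ▸ (Set.ncard_pos).2 h
    · have hpos' : (0 : ℝ) < 4 * t * r * ε := (Nat.cast_pos.2 hpos).trans_le hbudget
      have : ((4 * (t - 1) * k : ℕ) : ℝ) < (Vf i ∩ Pf j).ncard := by linarith [hbig i j h]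
      exact_mod_cast this
  obtain ⟨X, hX, hXstable⟩ :=
    exists_stableTo_diff hVpart hPpart hstab.stableToWithin_floor hpieces
  exact ⟨X, (Nat.cast_le.2 hX).trans hbudget, hXstable⟩

/-- Lemma: if `𝒫` is `ε`-stable to `𝒱` and every nonempty intersection `P_j ∩ V_i` has
size at least `10 t r ε`, then one can remove a set `X` of at most `4 t r ε` vertices so
that `𝒫_X` is stable to `𝒱_X`. -/
theorem stmt19 {V : Type*} [Fintype V] (r t : ℕ) (ht : 3 ≤ t) (hr : t ≤ r)
    (Vf : Fin r → Set V) (Pf : Fin (t - 1) → Set V)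
    (hVpart : ∀ x : V, ∃! i, x ∈ Vf i) (hPpart : ∀ x : V, ∃! j, x ∈ Pf j)
    (ε : ℝ) (hε : 0 < ε)
    (hstab : EpsStableTo Vf Pf ε)
    (hbig : ∀ i j, (Vf i ∩ Pf j).Nonempty → 10 * t * r * ε ≤ ((Vf i ∩ Pf j).ncard : ℝ)) :
    ∃ X : Set V, (X.ncard : ℝ) ≤ 4 * t * r * ε ∧
      StableTo (fun i => Vf i \ X) (fun j => Pf j \ X) :=
  stmt19_general r t hr Vf Pf hVpart hPpart ε hε hstab hbig
end
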